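/- arXiv:2407.09901 — 6 statements merged into one kernel-verified Lean document; each statement's English description precedes it below -/
import Mathlib

section
/- Let A be an l-dimensional standard CM matrix. Then the l-dimensional standard L₀-algebraic equation A Ξ Aᵀ − Ξ + Π_{l,1} = O has a unique real symmetric solution Ξ, and Ξ is positive definite. -/
open Matrix Filter

attribute [local instance] Matrix.frobeniusSeminormedAddCommGroup
  Matrix.frobeniusNormedAddCommGroup Matrix.frobeniusNormedRing Matrix.frobeniusNormedAlgebra
  Matrix.frobeniusNormedSpace

/-- An `l × l` real matrix is a *standard CM matrix* if all its complex eigenvalues have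
modulus strictly between 0 and 1 and it has companion form: the first row is
`(-c₁, …, -c_l)`, the subdiagonal entries are `1`, and all other entries are `0`. -/
def IsStandardCM {l : ℕ} (A : Matrix (Fin l) (Fin l) ℝ) : Prop :=
  (∀ s : ℂ, (A.map (fun x => (x : ℂ))).charpoly.IsRoot s →
    0 < ‖s‖ ∧ ‖s‖ < 1) ∧
  ∃ c : Fin l → ℝ, ∀ i j : Fin l,
    A i j = if (i : ℕ) = 0 then -c j else if (i : ℕ) = (j : ℕ) + 1 then 1 else 0

lemma CMaux.mem_spectrum_iff_isRoot {l : ℕ} (M : Matrix (Fin l) (Fin l) ℂ) (μ : ℂ) :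
    μ ∈ spectrum ℂ M ↔ M.charpoly.IsRoot μ := by
  have hdet : M.charpoly.eval μ = (Matrix.scalar (Fin l) μ - M).det := by
    rw [Matrix.charpoly, eval_det, Matrix.matPolyEquiv_charmatrix]
    simp
  have halg : algebraMap ℂ (Matrix (Fin l) (Fin l) ℂ) μ = Matrix.scalar (Fin l) μ := by
    rw [Matrix.scalar_apply, Matrix.algebraMap_eq_diagonal]; rfl
  rw [spectrum.mem_iff, Polynomial.IsRoot.def, hdet, halg,
    Matrix.isUnit_iff_isUnit_det, isUnit_iff_ne_zero, not_ne_iff]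

lemma CMaux.tendsto_norm_pow {l : ℕ} (hl : 0 < l) (A : Matrix (Fin l) (Fin l) ℂ)
    (h : ∀ μ ∈ spectrum ℂ A, ‖μ‖ < 1) :
    Tendsto (fun n => ‖A ^ n‖) atTop (nhds 0) := by
  haveI : Nonempty (Fin l) := ⟨⟨0, hl⟩⟩
  have hρ : spectralRadius ℂ A < 1 := by
    have := spectrum.spectralRadius_lt_of_forall_lt A (r := 1) (fun z hz => by
      simpa [← NNReal.coe_lt_coe] using h z hz)
    simpa using this
  obtain ⟨r, hr1, hr2⟩ := exists_between hρ
  have hrt : r ≠ ⊤ := (hr2.trans_le le_top).ne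
  set r' : NNReal := r.toNNReal with hr'
  have hrr' : r = (r' : ENNReal) := (ENNReal.coe_toNNReal hrt).symm
  have hr'1 : (r' : ℝ) < 1 := by
    have := hr2; rw [hrr'] at this
    exact_mod_cast this
  have hev := (spectrum.pow_nnnorm_pow_one_div_tendsto_nhds_spectralRadius A).eventually_lt_const hr1
  have hev2 : ∀ᶠ n : ℕ in atTop, ‖A ^ n‖ ≤ (r' : ℝ) ^ n := by
    filter_upwards [hev, eventually_ge_atTop 1] with n hn hn1
    have hne : (n : ℝ) ≠ 0 := by positivity
    have hx : (‖A ^ n‖₊ : ENNReal) ≤ r ^ (n : ℝ) := by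
      have h1 : ((‖A ^ n‖₊ : ENNReal) ^ (1 / n : ℝ)) ^ (n : ℝ) ≤ r ^ (n : ℝ) :=
        ENNReal.rpow_le_rpow hn.le (by positivity)
      rwa [← ENNReal.rpow_mul, one_div, inv_mul_cancel₀ hne, ENNReal.rpow_one] at h1
    rw [ENNReal.rpow_natCast] at hx
    rw [hrr', ← ENNReal.coe_pow, ENNReal.coe_le_coe] at hx
    exact_mod_cast hx
  exact squeeze_zero' (Eventually.of_forall fun n => norm_nonneg _) hev2
    (tendsto_pow_atTop_nhds_zero_of_lt_one (by positivity) hr'1)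

lemma CMaux.comp_pow_col {l : ℕ} (hl : 0 < l) (A : Matrix (Fin l) (Fin l) ℝ) (c : Fin l → ℝ)
    (hc : ∀ i j : Fin l,
      A i j = if (i : ℕ) = 0 then -c j else if (i : ℕ) = (j : ℕ) + 1 then 1 else 0) :
    ∀ k : ℕ, (∀ i : Fin l, k < (i : ℕ) → (A ^ k) i ⟨0, hl⟩ = 0) ∧
      (∀ hk : k < l, (A ^ k) ⟨k, hk⟩ ⟨0, hl⟩ = 1) := by
  intro k
  induction k with
  | zero =>
    constructor
    · intro i hi
      rw [pow_zero, Matrix.one_apply_ne]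
      exact fun h => by simp [h] at hi
    · intro hk; rw [pow_zero, Matrix.one_apply_eq]
  | succ k ih =>
    have hstep : ∀ i : Fin l, k + 1 ≤ (i : ℕ) →
        (A ^ (k + 1)) i ⟨0, hl⟩ = (A ^ k) ⟨(i : ℕ) - 1, by omega⟩ ⟨0, hl⟩ := by
      intro i hi
      rw [pow_succ', Matrix.mul_apply]
      rw [Finset.sum_eq_single (⟨(i : ℕ) - 1, by omega⟩ : Fin l)]
      · rw [hc]
        have h0 : (i : ℕ) ≠ 0 := by omega
        simp only [h0, if_false]
        have : (i : ℕ) = ((⟨(i : ℕ) - 1, by omega⟩ : Fin l) : ℕ) + 1 := by simp; omega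
        rw [if_pos this, one_mul]
      · intro j _ hj
        rw [hc]
        have h0 : (i : ℕ) ≠ 0 := by omega
        have h1 : (i : ℕ) ≠ (j : ℕ) + 1 := by
          intro h
          apply hj
          apply Fin.ext
          simp; omega
        simp [h0, h1]
      · intro h; exact absurd (Finset.mem_univ _) h
    constructor
    · intro i hi
      rw [hstep i (by omega)]
      exact ih.1 _ (by simp only [Fin.val_mk]; omega)
    · intro hk
      rw [hstep ⟨k + 1, hk⟩ (by simp)]
      have : ((⟨k + 1, hk⟩ : Fin l) : ℕ) - 1 = k := by simp
      simp only [this]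
      exact ih.2 (by omega)

lemma CMaux.control {l : ℕ} (hl : 0 < l) (A : Matrix (Fin l) (Fin l) ℝ)
    (hcol : ∀ k : ℕ, (∀ i : Fin l, k < (i : ℕ) → (A ^ k) i ⟨0, hl⟩ = 0) ∧
      (∀ hk : k < l, (A ^ k) ⟨k, hk⟩ ⟨0, hl⟩ = 1))
    (x : Fin l → ℝ) (hx : x ≠ 0) :
    ∃ k, k < l ∧ (∑ j, x j * (A ^ k) j ⟨0, hl⟩) ≠ 0 := by
  by_contra hcon
  push_neg at hcon
  apply hx
  funext i
  have key : ∀ m : ℕ, ∀ i : Fin l, (i : ℕ) = m → x i = 0 := by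
    intro m
    induction m using Nat.strong_induction_on with
    | _ m ih =>
      intro i him
      have hm : m < l := him ▸ i.isLt
      have hsum := hcon m hm
      rw [Finset.sum_eq_single i] at hsum
      · have h1 : (A ^ m) i ⟨0, hl⟩ = 1 := by
          have := (hcol m).2 hm
          convert this using 2
          exact Fin.ext him
        rw [h1, mul_one] at hsum
        exact hsum
      · intro j _ hji
        rcases lt_trichotomy (j : ℕ) m with h | h | h
        · rw [ih _ h j rfl, zero_mul]
        · exact absurd (Fin.ext (h.trans him.symm)) hji
        · rw [(hcol m).1 j h, mul_zero]
      · intro h; exact absurd (Finset.mem_univ _) h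
  exact key _ i rfl

lemma CMaux.quad_std {l : ℕ} (hl : 0 < l) (B : Matrix (Fin l) (Fin l) ℝ) (x : Fin l → ℝ) :
    x ⬝ᵥ (B * Matrix.single (⟨0, hl⟩ : Fin l) (⟨0, hl⟩ : Fin l) (1 : ℝ) * Bᵀ) *ᵥ x
      = (∑ j, x j * B j ⟨0, hl⟩) ^ 2 := by
  rw [← Matrix.mulVec_mulVec, ← Matrix.mulVec_mulVec]
  rw [Matrix.dotProduct_mulVec]
  set y := Bᵀ *ᵥ x with hy
  have hxB : x ᵥ* B = y := by rw [hy, Matrix.mulVec_transpose]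
  rw [hxB]
  have hye : y ⟨0, hl⟩ = ∑ j, x j * B j ⟨0, hl⟩ := by
    rw [hy]
    simp [Matrix.mulVec, dotProduct, Matrix.transpose_apply, mul_comm]
  rw [← hye]
  simp [Matrix.mulVec, dotProduct, Matrix.single, ite_and, sq]

lemma CMaux.entry_le_norm {l : ℕ} (M : Matrix (Fin l) (Fin l) ℝ) (i j : Fin l) :
    |M i j| ≤ ‖M‖ := by
  rw [Matrix.frobenius_norm_def]
  have h0 : |M i j| = (‖M i j‖ ^ (2:ℝ)) ^ (1/2 : ℝ) := by
    rw [← Real.rpow_mul (norm_nonneg _)]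
    norm_num [Real.norm_eq_abs]
  rw [h0]
  apply Real.rpow_le_rpow (by positivity) _ (by norm_num)
  calc ‖M i j‖ ^ (2:ℝ) ≤ ∑ j', ‖M i j'‖ ^ (2:ℝ) :=
        Finset.single_le_sum (f := fun j' => ‖M i j'‖ ^ (2:ℝ))
          (fun a _ => by positivity) (Finset.mem_univ j)
    _ ≤ ∑ i', ∑ j', ‖M i' j'‖ ^ (2:ℝ) :=
        Finset.single_le_sum (f := fun i' => ∑ j', ‖M i' j'‖ ^ (2:ℝ))
          (fun a _ => by positivity) (Finset.mem_univ i)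

lemma CMaux.quad_bound {l : ℕ} (M : Matrix (Fin l) (Fin l) ℝ) (x : Fin l → ℝ) :
    |x ⬝ᵥ M *ᵥ x| ≤ (∑ i, |x i|) ^ 2 * ‖M‖ := by
  calc |x ⬝ᵥ M *ᵥ x| ≤ ∑ i, |x i * (M *ᵥ x) i| := Finset.abs_sum_le_sum_abs _ _
    _ ≤ ∑ i, ∑ j, |x i| * |x j| * ‖M‖ := by
        apply Finset.sum_le_sum
        intro i _
        rw [abs_mul]
        calc |x i| * |(M *ᵥ x) i| = |x i| * |∑ j, M i j * x j| := rfl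
          _ ≤ |x i| * ∑ j, |M i j * x j| :=
              mul_le_mul_of_nonneg_left (Finset.abs_sum_le_sum_abs _ _) (abs_nonneg _)
          _ = ∑ j, |x i| * (|M i j| * |x j|) := by
              rw [Finset.mul_sum]
              exact Finset.sum_congr rfl fun j _ => by rw [abs_mul]
          _ ≤ ∑ j, |x i| * |x j| * ‖M‖ := by
              apply Finset.sum_le_sum
              intro j _
              have h2 : |x i| * (|M i j| * |x j|) = |x i| * |x j| * |M i j| := by ring
              rw [h2]
              exact mul_le_mul_of_nonneg_left (CMaux.entry_le_norm M i j) (by positivity)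
    _ = (∑ i, |x i|) ^ 2 * ‖M‖ := by
        rw [sq, Finset.sum_mul_sum, Finset.sum_mul]
        exact Finset.sum_congr rfl fun i _ => by rw [Finset.sum_mul]

/-- For a standard CM matrix `A`, the standard `L₀`-algebraic equation
`A Ξ Aᵀ - Ξ + Π_{l,1} = 0` has a unique real symmetric solution `Ξ`, and this solution
is positive definite. -/
theorem standard_L0_equation_unique_posdef_solution {l : ℕ} (hl : 0 < l)
    (A : Matrix (Fin l) (Fin l) ℝ) (hA : IsStandardCM A) :
    (∃! Ξ : Matrix (Fin l) (Fin l) ℝ, Ξ.IsSymm ∧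
      A * Ξ * Aᵀ - Ξ + Matrix.single (⟨0, hl⟩ : Fin l) (⟨0, hl⟩ : Fin l) (1 : ℝ) = 0) ∧
    (∀ Ξ : Matrix (Fin l) (Fin l) ℝ, Ξ.IsSymm →
      A * Ξ * Aᵀ - Ξ + Matrix.single (⟨0, hl⟩ : Fin l) (⟨0, hl⟩ : Fin l) (1 : ℝ) = 0 →
      Ξ.PosDef) := by
  obtain ⟨hroots, c, hc⟩ := hA
  set P : Matrix (Fin l) (Fin l) ℝ :=
    Matrix.single (⟨0, hl⟩ : Fin l) (⟨0, hl⟩ : Fin l) (1 : ℝ) with hPdef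
  -- powers tend to zero in norm
  have hnorm : Tendsto (fun n => ‖A ^ n‖) atTop (nhds 0) := by
    have hspec : ∀ μ ∈ spectrum ℂ (A.map (fun x => (x : ℂ))), ‖μ‖ < 1 := by
      intro μ hμ
      have := (hroots μ ((CMaux.mem_spectrum_iff_isRoot _ μ).mp hμ)).2
      simpa using this
    have h1 := CMaux.tendsto_norm_pow hl (A.map (fun x => (x : ℂ))) hspec
    have h2 : ∀ n : ℕ, ‖(A.map (fun x => (x : ℂ))) ^ n‖ = ‖A ^ n‖ := by
      intro n
      have hmap : (A.map (fun x => (x : ℂ))) ^ n = (A ^ n).map (fun x => (x : ℂ)) := by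
        have := map_pow (Complex.ofRealHom.mapMatrix) A n
        have h := this.symm
        simp only [RingHom.mapMatrix_apply] at h
        exact h
      rw [hmap]
      exact Matrix.frobenius_norm_map_eq (A ^ n) _ (fun a => by simp)
    simpa [h2] using h1
  -- the Lyapunov operator has trivial kernel
  have hker : ∀ X : Matrix (Fin l) (Fin l) ℝ, A * X * Aᵀ = X → X = 0 := by
    intro X hX
    have key : ∀ n : ℕ, A ^ n * X * (Aᵀ) ^ n = X := by
      intro n
      induction n with
      | zero => simp
      | succ n ih =>
        calc A ^ (n+1) * X * (Aᵀ) ^ (n+1) = A * (A ^ n * X * (Aᵀ) ^ n) * Aᵀ := by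
              rw [pow_succ' A n, pow_succ Aᵀ n]; noncomm_ring
          _ = A * X * Aᵀ := by rw [ih]
          _ = X := hX
    have hbound : ∀ n : ℕ, ‖X‖ ≤ ‖A ^ n‖ * (‖X‖ * ‖A ^ n‖) := by
      intro n
      have hT : ‖(Aᵀ) ^ n‖ = ‖A ^ n‖ := by
        rw [← Matrix.transpose_pow, Matrix.frobenius_norm_transpose]
      calc ‖X‖ = ‖A ^ n * X * (Aᵀ) ^ n‖ := by rw [key n]
        _ ≤ ‖A ^ n * X‖ * ‖(Aᵀ) ^ n‖ := norm_mul_le _ _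
        _ ≤ ‖A ^ n‖ * ‖X‖ * ‖(Aᵀ) ^ n‖ :=
            mul_le_mul_of_nonneg_right (norm_mul_le _ _) (norm_nonneg _)
        _ = ‖A ^ n‖ * (‖X‖ * ‖A ^ n‖) := by rw [hT]; ring
    have hlim : Tendsto (fun n => ‖A ^ n‖ * (‖X‖ * ‖A ^ n‖)) atTop (nhds 0) := by
      simpa using hnorm.mul (tendsto_const_nhds.mul hnorm)
    have : ‖X‖ ≤ 0 := ge_of_tendsto' hlim hbound
    simpa using norm_le_zero_iff.mp this
  -- the Lyapunov operator
  let L : Matrix (Fin l) (Fin l) ℝ →ₗ[ℝ] Matrix (Fin l) (Fin l) ℝ :=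
    { toFun := fun X => X - A * X * Aᵀ
      map_add' := fun X Y => by
        simp only [Matrix.mul_add, Matrix.add_mul]
        abel
      map_smul' := fun r X => by
        simp only [Matrix.mul_smul, Matrix.smul_mul, smul_sub, RingHom.id_apply] }
  have hLapply : ∀ X, L X = X - A * X * Aᵀ := fun X => rfl
  have hLinj : Function.Injective L := by
    intro X Y hXY
    rw [hLapply, hLapply] at hXY
    have h5 : X - Y = A * X * Aᵀ - A * Y * Aᵀ := sub_eq_sub_iff_sub_eq_sub.mp hXY
    have h6 : A * (X - Y) * Aᵀ = X - Y := by
      rw [Matrix.mul_sub, Matrix.sub_mul, ← h5]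
    have := hker _ h6
    exact sub_eq_zero.mp this
  have hLsurj : Function.Surjective L := LinearMap.surjective_of_injective hLinj
  -- conversions between the two forms of the equation
  have iff_eq : ∀ X : Matrix (Fin l) (Fin l) ℝ,
      (A * X * Aᵀ - X + P = 0) ↔ (X - A * X * Aᵀ = P) := by
    intro X
    constructor
    · intro h
      have h7 : X - A * X * Aᵀ - P = -(A * X * Aᵀ - X + P) := by abel
      rw [h, neg_zero, sub_eq_zero] at h7
      exact h7
    · intro h
      rw [← h]; abel
  obtain ⟨Ξ₀, hΞ₀⟩ := hLsurj P
  rw [hLapply] at hΞ₀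
  have hPT : Pᵀ = P := by
    ext i j
    simp only [Matrix.transpose_apply, hPdef, Matrix.single, Matrix.of_apply]
    exact if_congr and_comm rfl rfl
  have hsymm : Ξ₀.IsSymm := by
    have hLT : L Ξ₀ᵀ = L Ξ₀ := by
      rw [hLapply, hLapply, hΞ₀, ← hPT, ← hΞ₀]
      rw [Matrix.transpose_sub, Matrix.transpose_mul, Matrix.transpose_mul,
        Matrix.transpose_transpose, mul_assoc]
    exact hLinj hLT
  constructor
  · refine ⟨Ξ₀, ⟨hsymm, (iff_eq Ξ₀).mpr hΞ₀⟩, ?_⟩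
    rintro Y ⟨hYsymm, hYeq⟩
    apply hLinj
    rw [hLapply, hLapply, hΞ₀, (iff_eq Y).mp hYeq]
  · intro Ξ hsym heq
    have hEq : Ξ - A * Ξ * Aᵀ = P := (iff_eq Ξ).mp heq
    have hrec : Ξ = A * Ξ * Aᵀ + P := by rw [← hEq]; abel
    have htel : ∀ n : ℕ,
        Ξ = A ^ n * Ξ * (Aᵀ) ^ n + ∑ k ∈ Finset.range n, A ^ k * P * (Aᵀ) ^ k := by
      intro n
      induction n with
      | zero => simp
      | succ n ih =>
        calc Ξ = A ^ n * Ξ * (Aᵀ) ^ n + ∑ k ∈ Finset.range n, A ^ k * P * (Aᵀ) ^ k := ih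
          _ = A ^ n * (A * Ξ * Aᵀ + P) * (Aᵀ) ^ n
                + ∑ k ∈ Finset.range n, A ^ k * P * (Aᵀ) ^ k := by rw [← hrec]
          _ = A ^ (n+1) * Ξ * (Aᵀ) ^ (n+1)
                + ∑ k ∈ Finset.range (n+1), A ^ k * P * (Aᵀ) ^ k := by
              rw [Finset.sum_range_succ, pow_succ A n, pow_succ' Aᵀ n]
              noncomm_ring
    refine Matrix.PosDef.of_dotProduct_mulVec_pos ?_ ?_
    · show Ξᴴ = Ξ
      rw [Matrix.conjTranspose_eq_transpose_of_trivial]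
      exact hsym
    · intro x hx
      have hxs : star x = x := star_trivial x
      rw [hxs]
      set g : ℕ → ℝ := fun k => ∑ j, x j * (A ^ k) j ⟨0, hl⟩ with hg
      let q : Matrix (Fin l) (Fin l) ℝ →ₗ[ℝ] ℝ :=
        { toFun := fun M => x ⬝ᵥ M *ᵥ x
          map_add' := fun M N => by
            simp [Matrix.add_mulVec, dotProduct_add]
          map_smul' := fun r M => by
            simp [Matrix.smul_mulVec, dotProduct_smul, smul_eq_mul] }
      have hqapply : ∀ M, q M = x ⬝ᵥ M *ᵥ x := fun M => rfl
      have hterm : ∀ k : ℕ, q (A ^ k * P * (Aᵀ) ^ k) = g k ^ 2 := by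
        intro k
        rw [hqapply, ← Matrix.transpose_pow]
        exact CMaux.quad_std hl (A ^ k) x
      have hsums : ∀ n : ℕ,
          x ⬝ᵥ Ξ *ᵥ x = q (A ^ n * Ξ * (Aᵀ) ^ n) + ∑ k ∈ Finset.range n, g k ^ 2 := by
        intro n
        conv_lhs => rw [htel n]
        rw [← hqapply, map_add, map_sum]
        congr 1
        exact Finset.sum_congr rfl fun k _ => hterm k
      have heps : Tendsto (fun n => q (A ^ n * Ξ * (Aᵀ) ^ n)) atTop (nhds 0) := by
        have hlim0 : Tendsto (fun n => (∑ i, |x i|) ^ 2 * (‖A ^ n‖ * (‖Ξ‖ * ‖A ^ n‖)))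
            atTop (nhds 0) := by
          simpa using tendsto_const_nhds.mul (hnorm.mul (tendsto_const_nhds.mul hnorm))
        apply squeeze_zero_norm _ hlim0
        intro n
        have hb1 : ‖A ^ n * Ξ * (Aᵀ) ^ n‖ ≤ ‖A ^ n‖ * (‖Ξ‖ * ‖A ^ n‖) := by
          have hT : ‖(Aᵀ) ^ n‖ = ‖A ^ n‖ := by
            rw [← Matrix.transpose_pow, Matrix.frobenius_norm_transpose]
          calc ‖A ^ n * Ξ * (Aᵀ) ^ n‖ ≤ ‖A ^ n * Ξ‖ * ‖(Aᵀ) ^ n‖ := norm_mul_le _ _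
            _ ≤ ‖A ^ n‖ * ‖Ξ‖ * ‖(Aᵀ) ^ n‖ :=
                mul_le_mul_of_nonneg_right (norm_mul_le _ _) (norm_nonneg _)
            _ = ‖A ^ n‖ * (‖Ξ‖ * ‖A ^ n‖) := by rw [hT]; ring
        calc ‖q (A ^ n * Ξ * (Aᵀ) ^ n)‖ ≤ (∑ i, |x i|) ^ 2 * ‖A ^ n * Ξ * (Aᵀ) ^ n‖ := by
              rw [hqapply, Real.norm_eq_abs]
              exact CMaux.quad_bound _ x
          _ ≤ (∑ i, |x i|) ^ 2 * (‖A ^ n‖ * (‖Ξ‖ * ‖A ^ n‖)) :=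
              mul_le_mul_of_nonneg_left hb1 (by positivity)
      have hpartial : Tendsto (fun n => ∑ k ∈ Finset.range n, g k ^ 2) atTop
          (nhds (x ⬝ᵥ Ξ *ᵥ x)) := by
        have hfn : ∀ n, ∑ k ∈ Finset.range n, g k ^ 2
            = x ⬝ᵥ Ξ *ᵥ x - q (A ^ n * Ξ * (Aᵀ) ^ n) := by
          intro n
          rw [hsums n]; ring
        simp only [hfn]
        simpa using tendsto_const_nhds.sub heps
      obtain ⟨k0, hk0l, hk0⟩ := CMaux.control hl A (CMaux.comp_pow_col hl A c hc) x hx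
      have hS : 0 < ∑ k ∈ Finset.range l, g k ^ 2 := by
        apply Finset.sum_pos' (fun k _ => sq_nonneg _)
        exact ⟨k0, Finset.mem_range.mpr hk0l,
          lt_of_le_of_ne (sq_nonneg _) (Ne.symm (pow_ne_zero 2 hk0))⟩
      have hle : ∑ k ∈ Finset.range l, g k ^ 2 ≤ x ⬝ᵥ Ξ *ᵥ x := by
        apply ge_of_tendsto hpartial
        filter_upwards [eventually_ge_atTop l] with n hn
        apply Finset.sum_le_sum_of_subset_of_nonneg (Finset.range_subset_range.mpr hn)
        intro k _ _
        exact sq_nonneg _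
      exact lt_of_lt_of_le hS hle
end

section
/- Let A be an l-dimensional standard CM matrix and let Ξ be the unique real symmetric solution of A Ξ Aᵀ − Ξ + Π_{l,1} = O. Then Ξ is a symmetric Toeplitz matrix: there is a vector ζ = (ζ₁,…,ζ_l)ᵀ ∈ ℝ^l such that Ξ(i,j) = ζ_{|i−j|+1} for all i,j ∈ {1,…,l}, and ζ satisfies G_{c,A} ζ = e₁, where e₁ = (1,0,…,0)ᵀ. -/
open Matrix

/-- The *contraction-related matrix* `G_{c,A}` of an `l × l` real matrix `A`.  Writing the
characteristic polynomial of `A` as `ψ_A(λ) = λ^l + ∑_{i=1}^l a_i λ^{l-i}` and setting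
`a_j = 0` for `j ∉ {1, …, l}` (indices here are 1-based), its entries are:
`G(1,1) = 1 - ∑_{k=1}^l a_k²`, `G(1,j) = -∑_{k=1}^l a_k (a_{k+1-j} + a_{k+j-1})` for `j ≥ 2`,
`G(i,1) = a_{i-1}` for `i ≥ 2`, `G(i,i) = 1 + a_{2i-2}` for `i ≥ 2`, and
`G(i,j) = a_{i-j} + a_{i+j-2}` for `i, j ≥ 2` with `i ≠ j`. -/
noncomputable def contractionMatrix {l : ℕ} (A : Matrix (Fin l) (Fin l) ℝ) :
    Matrix (Fin l) (Fin l) ℝ :=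
  let a : ℤ → ℝ := fun k =>
    if 1 ≤ k ∧ k ≤ (l : ℤ) then A.charpoly.coeff (l - k.toNat) else 0
  Matrix.of fun u v : Fin l =>
    let i : ℤ := (u : ℕ) + 1
    let j : ℤ := (v : ℕ) + 1
    if i = 1 ∧ j = 1 then 1 - ∑ k ∈ Finset.Icc (1 : ℤ) (l : ℤ), (a k) ^ 2
    else if i = 1 then -∑ k ∈ Finset.Icc (1 : ℤ) (l : ℤ), a k * (a (k + 1 - j) + a (k + j - 1))
    else if j = 1 then a (i - 1)
    else if i = j then 1 + a (2 * i - 2)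
    else a (i - j) + a (i + j - 2)

namespace CMAux

open Polynomial

def compM {l : ℕ} (c : Fin l → ℝ) : Matrix (Fin l) (Fin l) ℝ :=
  Matrix.of fun i j => if (i : ℕ) = 0 then -c j else if (i : ℕ) = (j : ℕ) + 1 then 1 else 0

lemma compM_charpoly : ∀ {l : ℕ} (c : Fin l → ℝ),
    (compM c).charpoly = X ^ l + ∑ j : Fin l, C (c j) * X ^ (l - 1 - (j : ℕ)) := by
  intro l
  induction l with
  | zero => intro c; simp [Matrix.charpoly, Matrix.det_fin_zero]
  | succ n ih =>
    intro c
    cases n with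
    | zero =>
      rw [Matrix.charpoly, Matrix.det_fin_one, charmatrix_apply_eq]
      have : compM c 0 0 = -c 0 := by simp [compM]
      rw [this]
      simp
    | succ m =>
      rw [Matrix.charpoly, Matrix.det_succ_column _ (Fin.last (m+1))]
      rw [Finset.sum_eq_add_of_mem (0 : Fin (m+2)) (Fin.last (m+1)) (Finset.mem_univ _)
        (Finset.mem_univ _) (by simp [Fin.ext_iff, Fin.last]) ?_]
      · -- main terms
        have entry0 : charmatrix (compM c) 0 (Fin.last (m+1)) = C (c (Fin.last (m+1))) := by
          rw [charmatrix_apply_ne _ _ _ (by simp [Fin.ext_iff, Fin.last])]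
          have : compM c 0 (Fin.last (m+1)) = -c (Fin.last (m+1)) := by simp [compM]
          rw [this, map_neg, neg_neg]
        have hM2 : (charmatrix (compM c)).submatrix (Fin.last (m+1)).succAbove
            (Fin.last (m+1)).succAbove
            = charmatrix (compM (fun j : Fin (m+1) => c j.castSucc)) := by
          ext p q
          rw [Matrix.submatrix_apply, Fin.succAbove_last, charmatrix_apply, charmatrix_apply]
          have hd : (Matrix.diagonal (fun _ : Fin (m+2) => (X:ℝ[X]))) p.castSucc q.castSucc
              = (Matrix.diagonal (fun _ : Fin (m+1) => (X:ℝ[X]))) p q := by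
            by_cases h : p = q
            · subst h; rw [Matrix.diagonal_apply_eq, Matrix.diagonal_apply_eq]
            · rw [Matrix.diagonal_apply_ne _ (by simpa [Fin.ext_iff] using h),
                Matrix.diagonal_apply_ne _ h]
          rw [hd, show compM c p.castSucc q.castSucc
            = compM (fun j : Fin (m+1) => c j.castSucc) p q from by simp only [compM, Matrix.of_apply, Fin.val_castSucc]]
        have hdiag : ∀ p : Fin (m+1),
            ((charmatrix (compM c)).submatrix (0 : Fin (m+2)).succAbove
              (Fin.last (m+1)).succAbove) p p = -1 := by
          intro p
          rw [Matrix.submatrix_apply, Fin.succAbove_last, Fin.zero_succAbove,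
            charmatrix_apply_ne _ _ _ (by
              simp only [ne_eq, Fin.ext_iff, Fin.val_succ, Fin.coe_castSucc]; omega)]
          have : compM c p.succ p.castSucc = 1 := by simp [compM]
          rw [this]
          simp
        have htri : ((charmatrix (compM c)).submatrix (0 : Fin (m+2)).succAbove
            (Fin.last (m+1)).succAbove).BlockTriangular id := by
          intro p q hqp
          simp only [id] at hqp
          rw [Matrix.submatrix_apply, Fin.succAbove_last, Fin.zero_succAbove,
            charmatrix_apply_ne _ _ _ (by
              simp only [ne_eq, Fin.ext_iff, Fin.val_succ, Fin.coe_castSucc]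
              rw [Fin.lt_def] at hqp; omega)]
          have : compM c p.succ q.castSucc = 0 := by
            simp only [compM, Matrix.of_apply]
            rw [if_neg (by simp), if_neg (by
              simp only [Fin.val_succ, Fin.coe_castSucc]
              rw [Fin.lt_def] at hqp; omega)]
          rw [this, map_zero, neg_zero]
        have hM1det : det ((charmatrix (compM c)).submatrix (0 : Fin (m+2)).succAbove
            (Fin.last (m+1)).succAbove) = (-1) ^ (m+1) := by
          rw [Matrix.det_of_upperTriangular htri,
            Finset.prod_congr rfl (fun p _ => hdiag p)]
          simp
        rw [entry0, hM2, hM1det]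
        rw [show ((compM fun j : Fin (m+1) => c j.castSucc).charmatrix).det
            = (compM fun j : Fin (m+1) => c j.castSucc).charpoly from rfl, ih]
        have entrylast : charmatrix (compM c) (Fin.last (m+1)) (Fin.last (m+1)) = X := by
          rw [charmatrix_apply_eq]
          have : compM c (Fin.last (m+1)) (Fin.last (m+1)) = 0 := by
            simp only [compM, Matrix.of_apply, Fin.last]
            rw [if_neg (by omega), if_neg (by omega)]
          rw [this, map_zero, sub_zero]
        rw [entrylast]
        rw [Fin.sum_univ_castSucc (f := fun j : Fin (m+2) => C (c j) * X ^ (m + 1 + 1 - 1 - (j:ℕ)))]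
        have hsum : ∀ j : Fin (m+1),
            X * (C (c j.castSucc) * X ^ (m + 1 - 1 - (j:ℕ)))
              = C (c j.castSucc) * X ^ (m + 1 + 1 - 1 - ((j.castSucc : Fin (m+2)):ℕ)) := by
          intro j
          have hexp : (m + 1 + 1 - 1 - ((j.castSucc : Fin (m+2)):ℕ)) = (m + 1 - 1 - (j:ℕ)) + 1 := by
            have := j.isLt; simp only [Fin.coe_castSucc]; omega
          rw [hexp, pow_succ]
          ring
        have s2 : (-1:ℝ[X]) ^ (((Fin.last (m+1)):ℕ) + ((Fin.last (m+1)):ℕ)) = 1 := by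
          simp [Fin.val_last]
        rw [s2, one_mul, mul_add, Finset.mul_sum, Finset.sum_congr rfl (fun j _ => hsum j)]
        have hsgn : (-1:ℝ[X]) ^ (((0:Fin (m+2)):ℕ) + ((Fin.last (m+1)):ℕ)) * C (c (Fin.last (m+1))) * (-1) ^ (m + 1)
            = C (c (Fin.last (m+1))) := by
          simp only [Fin.val_last, Fin.val_zero, zero_add]
          rw [mul_comm, ← mul_assoc, ← mul_pow]
          simp
        rw [hsgn, show m + 1 + 1 - 1 - ((Fin.last (m+1)):ℕ) = 0 from by simp [Fin.val_last]]
        ring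
      · intro i _ hi
        obtain ⟨hi0, hil⟩ := hi
        have h1 : (i : ℕ) ≠ 0 := fun h => hi0 (Fin.ext h)
        have h2 : ¬ ((i : ℕ) = (Fin.last (m+1) : ℕ) + 1) := by
          have := i.isLt; simp [Fin.last]; omega
        have : charmatrix (compM c) i (Fin.last (m+1)) = 0 := by
          rw [charmatrix_apply_ne _ _ _ hil]
          have : compM c i (Fin.last (m+1)) = 0 := by
            simp only [compM, Matrix.of_apply]
            rw [if_neg h1, if_neg (by simpa using h2)]
          rw [this, map_zero, neg_zero]
        rw [this]
        ring

lemma compM_charpoly_coeff {l : ℕ} (c : Fin l → ℝ) (k : ℕ) (h1 : 1 ≤ k) (h2 : k ≤ l) :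
    (compM c).charpoly.coeff (l - k) = c ⟨k - 1, by omega⟩ := by
  rw [compM_charpoly, coeff_add, coeff_X_pow, if_neg (by omega), finset_sum_coeff]
  have hterm : ∀ j : Fin l, (C (c j) * X ^ (l - 1 - (j : ℕ))).coeff (l - k)
      = if (j : ℕ) = k - 1 then c j else 0 := by
    intro j
    rw [coeff_C_mul, coeff_X_pow]
    have := j.isLt
    by_cases h : (j : ℕ) = k - 1
    · rw [if_pos (by omega), if_pos h, mul_one]
    · rw [if_neg (by omega), if_neg h, mul_zero]
  rw [Finset.sum_congr rfl fun j _ => hterm j, zero_add,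
    Finset.sum_eq_single (⟨k - 1, by omega⟩ : Fin l)]
  · simp
  · intro j _ hj
    rw [if_neg (fun h => hj (Fin.ext h))]
  · intro h
    exact absurd (Finset.mem_univ _) h

lemma sum_fin_to_Icc {l : ℕ} (F : ℤ → ℝ) :
    ∑ v : Fin l, F ((v : ℕ) : ℤ) = ∑ m ∈ Finset.Icc (0 : ℤ) ((l : ℤ) - 1), F m := by
  rcases Nat.eq_zero_or_pos l with h | h
  · subst h
    rw [Finset.univ_eq_empty, Finset.sum_empty, Finset.Icc_eq_empty (by norm_num),
      Finset.sum_empty]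
  · refine Finset.sum_nbij' (fun v => ((v : ℕ) : ℤ)) (fun m => ⟨m.toNat % l, Nat.mod_lt _ h⟩)
      ?_ ?_ ?_ ?_ ?_
    · intro v _; have := v.isLt; simp only [Finset.mem_Icc]; omega
    · intro m _; exact Finset.mem_univ _
    · intro v _; ext; simp [Nat.mod_eq_of_lt v.isLt]
    · intro m hm; simp [Finset.mem_Icc] at hm
      have : m.toNat % l = m.toNat := Nat.mod_eq_of_lt (by omega)
      simp [this]; omega
    · intro v _; rfl

lemma sum_Icc_reflect (u a b : ℤ) (F : ℤ → ℝ) :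
    ∑ m ∈ Finset.Icc a b, F m = ∑ k ∈ Finset.Icc (u - b) (u - a), F (u - k) := by
  refine Finset.sum_nbij' (fun m => u - m) (fun k => u - k) ?_ ?_ ?_ ?_ ?_ <;>
    intro x hx <;> simp [Finset.mem_Icc] at hx ⊢ <;> omega

lemma sum_Icc_shift (t a b : ℤ) (F : ℤ → ℝ) :
    ∑ m ∈ Finset.Icc a b, F m = ∑ k ∈ Finset.Icc (a + t) (b + t), F (k - t) := by
  refine Finset.sum_nbij' (fun m => m + t) (fun k => k - t) ?_ ?_ ?_ ?_ ?_ <;>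
    intro x hx <;> simp [Finset.mem_Icc] at hx ⊢ <;> omega

lemma sum_Icc_one_fin {l : ℕ} (F : ℤ → ℝ) :
    ∑ k ∈ Finset.Icc (1 : ℤ) (l : ℤ), F k = ∑ p : Fin l, F (((p : ℕ) : ℤ) + 1) := by
  rw [sum_Icc_shift (-1) 1 (l : ℤ) F, show (1:ℤ) + -1 = 0 from by ring,
    show (l:ℤ) + -1 = (l:ℤ) - 1 from by ring, sum_fin_to_Icc (fun m => F (m + 1))]
  refine Finset.sum_congr rfl fun k _ => ?_
  congr 1 <;> omega

lemma key {l : ℕ} (a Z : ℤ → ℝ) (ha : ∀ k : ℤ, (k < 1 ∨ (l : ℤ) < k) → a k = 0)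
    (hZe : ∀ m : ℤ, Z (-m) = Z m)
    (u : ℤ) (h1 : 1 ≤ u) (h2 : u ≤ (l : ℤ)) :
    (∑ v : Fin l, (a (u - ((v : ℕ) : ℤ)) + a (u + ((v : ℕ) : ℤ))) * Z ((v : ℕ) : ℤ))
        - a u * Z 0
      = ∑ q : Fin l, a (((q : ℕ) : ℤ) + 1) * Z (u - (((q : ℕ) : ℤ) + 1)) := by
  have hl : 1 ≤ (l : ℤ) := le_trans h1 h2
  rw [sum_fin_to_Icc (fun m => (a (u - m) + a (u + m)) * Z m),
    sum_fin_to_Icc (fun m => a (m + 1) * Z (u - (m + 1)))]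
  have hR : ∑ m ∈ Finset.Icc (0 : ℤ) ((l : ℤ) - 1), a (m + 1) * Z (u - (m + 1))
      = ∑ k ∈ Finset.Icc (1 : ℤ) (l : ℤ), a k * Z (u - k) := by
    rw [sum_Icc_shift 1 0 ((l:ℤ) - 1) (fun m => a (m + 1) * Z (u - (m + 1)))]
    norm_num
  rw [hR]
  have hsplit : ∑ m ∈ Finset.Icc (0 : ℤ) ((l : ℤ) - 1), (a (u - m) + a (u + m)) * Z m
      = (∑ m ∈ Finset.Icc (0 : ℤ) ((l : ℤ) - 1), a (u - m) * Z m)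
        + ∑ m ∈ Finset.Icc (0 : ℤ) ((l : ℤ) - 1), a (u + m) * Z m := by
    rw [← Finset.sum_add_distrib]; congr 1; ext m; ring
  rw [hsplit]
  have hS1 : ∑ m ∈ Finset.Icc (0 : ℤ) ((l : ℤ) - 1), a (u - m) * Z m
      = ∑ k ∈ Finset.Ioc (u - (l : ℤ)) u, a k * Z (u - k) := by
    rw [sum_Icc_reflect u 0 ((l:ℤ)-1) (fun m => a (u - m) * Z m)]
    refine Finset.sum_congr (by ext x; simp only [Finset.mem_Icc, Finset.mem_Ioc]; omega)
      (fun k _ => by rw [show u - (u - k) = k from by ring])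
  have hS2 : ∑ m ∈ Finset.Icc (0 : ℤ) ((l : ℤ) - 1), a (u + m) * Z m
      = ∑ k ∈ Finset.Icc u (u + (l : ℤ) - 1), a k * Z (u - k) := by
    rw [sum_Icc_shift u 0 ((l:ℤ)-1) (fun m => a (u + m) * Z m)]
    rw [show (0:ℤ) + u = u from by ring, show (l:ℤ) - 1 + u = u + (l:ℤ) - 1 from by ring]
    apply Finset.sum_congr rfl
    intro k _
    rw [show u + (k - u) = k from by ring, ← hZe (u - k), show -(u - k) = k - u from by ring]
  rw [hS1, hS2]
  have hS2' : ∑ k ∈ Finset.Icc u (u + (l : ℤ) - 1), a k * Z (u - k)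
      = a u * Z 0 + ∑ k ∈ Finset.Ioc u (u + (l : ℤ) - 1), a k * Z (u - k) := by
    rw [Finset.Icc_eq_cons_Ioc (by omega), Finset.sum_cons]
    norm_num
  rw [hS2']
  have hjoin : (∑ k ∈ Finset.Ioc (u - (l : ℤ)) u, a k * Z (u - k))
      + ∑ k ∈ Finset.Ioc u (u + (l : ℤ) - 1), a k * Z (u - k)
      = ∑ k ∈ Finset.Ioc (u - (l : ℤ)) (u + (l : ℤ) - 1), a k * Z (u - k) := by
    rw [← Finset.Ioc_union_Ioc_eq_Ioc (show u - (l:ℤ) ≤ u by omega)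
        (show u ≤ u + (l:ℤ) - 1 by omega),
      Finset.sum_union (by
        rw [Finset.disjoint_left]
        intro x hx hx'
        simp only [Finset.mem_Ioc] at hx hx'
        omega)]
  have hfinal : ∑ k ∈ Finset.Ioc (u - (l : ℤ)) (u + (l : ℤ) - 1), a k * Z (u - k)
      = ∑ k ∈ Finset.Icc (1 : ℤ) (l : ℤ), a k * Z (u - k) := by
    symm
    apply Finset.sum_subset
    · intro x hx; simp [Finset.mem_Icc, Finset.mem_Ioc] at hx ⊢; omega
    · intro x _ hx
      simp [Finset.mem_Icc] at hx
      rcases le_or_gt x 0 with h | h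
      · rw [ha x (Or.inl (by omega))]; ring
      · rw [ha x (Or.inr (by omega))]; ring
  rw [← hfinal, ← hjoin]
  ring

noncomputable def aI (l : ℕ) (c : Fin l → ℝ) : ℤ → ℝ := fun k =>
  if h : 1 ≤ k ∧ k ≤ (l : ℤ) then c ⟨(k - 1).toNat, by omega⟩ else 0

lemma aI_support {l : ℕ} (c : Fin l → ℝ) (k : ℤ) (h : k < 1 ∨ (l : ℤ) < k) :
    aI l c k = 0 := by
  rw [aI, dif_neg (by omega)]

lemma aI_succ {l : ℕ} (c : Fin l → ℝ) (p : Fin l) : aI l c (((p : ℕ) : ℤ) + 1) = c p := by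
  have hp := p.isLt
  rw [aI, dif_pos (by omega)]
  congr 1
  ext
  simp

lemma contraction_apply {l : ℕ} (A : Matrix (Fin l) (Fin l) ℝ) (c : Fin l → ℝ)
    (hpt : ∀ k : ℤ, (if 1 ≤ k ∧ k ≤ (l : ℤ) then A.charpoly.coeff (l - k.toNat) else 0)
      = aI l c k) (u v : Fin l) :
    contractionMatrix A u v =
      if (u : ℕ) = 0 ∧ (v : ℕ) = 0 then
        1 - ∑ k ∈ Finset.Icc (1 : ℤ) (l : ℤ), (aI l c k) ^ 2
      else if (u : ℕ) = 0 then
        -∑ k ∈ Finset.Icc (1 : ℤ) (l : ℤ),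
          aI l c k * (aI l c (k - ((v : ℕ) : ℤ)) + aI l c (k + ((v : ℕ) : ℤ)))
      else if (v : ℕ) = 0 then aI l c ((u : ℕ) : ℤ)
      else if u = v then 1 + aI l c (2 * ((u : ℕ) : ℤ))
      else aI l c (((u : ℕ) : ℤ) - ((v : ℕ) : ℤ)) + aI l c (((u : ℕ) : ℤ) + ((v : ℕ) : ℤ)) := by
  simp only [contractionMatrix, Matrix.of_apply, hpt]
  have e1 : (((u : ℕ) : ℤ) + 1 = 1) ↔ ((u : ℕ) = 0) := by omega
  have e2 : (((v : ℕ) : ℤ) + 1 = 1) ↔ ((v : ℕ) = 0) := by omega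
  have e3 : (((u : ℕ) : ℤ) + 1 = ((v : ℕ) : ℤ) + 1) ↔ (u = v) := by
    rw [Fin.ext_iff]; omega
  rw [if_congr (and_congr e1 e2) rfl rfl, if_congr e1 rfl rfl, if_congr e2 rfl rfl,
    if_congr e3 rfl rfl]
  have a1 : (((u : ℕ) : ℤ) + 1 - 1) = ((u : ℕ) : ℤ) := by ring
  have a2 : (2 * (((u : ℕ) : ℤ) + 1) - 2) = 2 * ((u : ℕ) : ℤ) := by ring
  have a3 : (((u : ℕ) : ℤ) + 1 - (((v : ℕ) : ℤ) + 1)) = ((u : ℕ) : ℤ) - ((v : ℕ) : ℤ) := by ring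
  have a4 : (((u : ℕ) : ℤ) + 1 + (((v : ℕ) : ℤ) + 1) - 2) = ((u : ℕ) : ℤ) + ((v : ℕ) : ℤ) := by
    ring
  rw [a1, a2, a3, a4,
    show (∑ x ∈ Finset.Icc (1:ℤ) (l:ℤ), aI l c x *
        (aI l c (x + 1 - (((v:ℕ):ℤ) + 1)) + aI l c (x + (((v:ℕ):ℤ) + 1) - 1)))
      = ∑ k ∈ Finset.Icc (1:ℤ) (l:ℤ), aI l c k *
        (aI l c (k - ((v:ℕ):ℤ)) + aI l c (k + ((v:ℕ):ℤ)))
      from Finset.sum_congr rfl fun k _ => by congr 2 <;> ring]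

end CMAux

/-- For a standard CM matrix `A`, the unique symmetric solution `Ξ` of
`A Ξ Aᵀ - Ξ + Π_{l,1} = 0` is a symmetric Toeplitz matrix `Ξ(i,j) = ζ_{|i-j|+1}` whose
generating vector `ζ` satisfies `G_{c,A} ζ = e₁`. -/
theorem standard_L0_solution_toeplitz {l : ℕ} (hl : 0 < l)
    (A : Matrix (Fin l) (Fin l) ℝ) (hA : IsStandardCM A)
    (Ξ : Matrix (Fin l) (Fin l) ℝ) (hsymm : Ξ.IsSymm)
    (heq : A * Ξ * Aᵀ - Ξ +
      Matrix.single (⟨0, hl⟩ : Fin l) (⟨0, hl⟩ : Fin l) (1 : ℝ) = 0) :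
    ∃ ζ : Fin l → ℝ,
      (∀ i j : Fin l, Ξ i j =
        ζ (if _ : (i : ℕ) ≤ (j : ℕ) then
            ⟨(j : ℕ) - (i : ℕ), Nat.lt_of_le_of_lt (Nat.sub_le _ _) j.isLt⟩
          else ⟨(i : ℕ) - (j : ℕ), Nat.lt_of_le_of_lt (Nat.sub_le _ _) i.isLt⟩)) ∧
      (contractionMatrix A) *ᵥ ζ = Pi.single (⟨0, hl⟩ : Fin l) 1 := by
  classical
  open CMAux in
  obtain ⟨-, c, hc⟩ := hA
  set z : Fin l := ⟨0, hl⟩ with hzdef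
  have hzv : (z : ℕ) = 0 := rfl
  have hAc : A = CMAux.compM c := by
    ext i j; rw [hc]; rfl
  have hpt : ∀ k : ℤ, (if 1 ≤ k ∧ k ≤ (l : ℤ) then A.charpoly.coeff (l - k.toNat) else 0)
      = CMAux.aI l c k := by
    intro k
    by_cases h : 1 ≤ k ∧ k ≤ (l : ℤ)
    · rw [if_pos h, hAc,
        show l - k.toNat = l - k.toNat from rfl,
        CMAux.compM_charpoly_coeff c k.toNat (by omega) (by omega),
        CMAux.aI, dif_pos h]
      congr 1
      ext
      simp only []
      omega
    · rw [if_neg h, CMAux.aI, dif_neg h]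
  -- pointwise matrix equation
  have hE : ∀ u v : Fin l,
      (∑ q : Fin l, (∑ p : Fin l, A u p * Ξ p q) * A v q) - Ξ u v
        + (if z = u ∧ z = v then (1:ℝ) else 0) = 0 := by
    intro u v
    have h0 := congrFun (congrFun heq u) v
    simpa [Matrix.mul_apply, Matrix.transpose_apply, Matrix.single,
      Matrix.sub_apply, Matrix.add_apply] using h0
  -- row computations
  have hrow0 : ∀ x : Fin l → ℝ, (∑ p : Fin l, A z p * x p) = -∑ p : Fin l, c p * x p := by
    intro x
    rw [← Finset.sum_neg_distrib]
    refine Finset.sum_congr rfl fun p _ => ?_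
    rw [hc, if_pos hzv]
    ring
  have hrowS : ∀ (u : Fin l), (u : ℕ) ≠ 0 → ∀ x : Fin l → ℝ,
      (∑ p : Fin l, A u p * x p)
        = x ⟨(u:ℕ) - 1, Nat.lt_of_le_of_lt (Nat.sub_le _ _) u.isLt⟩ := by
    intro u hu x
    rw [Finset.sum_eq_single
      (⟨(u:ℕ) - 1, Nat.lt_of_le_of_lt (Nat.sub_le _ _) u.isLt⟩ : Fin l)]
    · rw [hc, if_neg hu, if_pos (by simp; omega), one_mul]
    · intro p _ hp
      rw [hc, if_neg hu, if_neg, zero_mul]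
      intro hcon
      apply hp
      ext
      simp at hcon ⊢
      omega
    · intro hmem; exact absurd (Finset.mem_univ _) hmem
  -- shift
  have hshift : ∀ u v : Fin l, (u:ℕ) ≠ 0 → (v:ℕ) ≠ 0 →
      Ξ u v = Ξ ⟨(u:ℕ) - 1, Nat.lt_of_le_of_lt (Nat.sub_le _ _) u.isLt⟩
               ⟨(v:ℕ) - 1, Nat.lt_of_le_of_lt (Nat.sub_le _ _) v.isLt⟩ := by
    intro u v hu hv
    have h := hE u v
    rw [if_neg (by rintro ⟨h1, -⟩; exact hu (by rw [← h1])), add_zero] at h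
    have e1 : (∑ q : Fin l, (∑ p : Fin l, A u p * Ξ p q) * A v q)
        = ∑ q : Fin l, A v q *
            Ξ ⟨(u:ℕ) - 1, Nat.lt_of_le_of_lt (Nat.sub_le _ _) u.isLt⟩ q := by
      refine Finset.sum_congr rfl fun q _ => ?_
      rw [hrowS u hu (fun p => Ξ p q), mul_comm]
    rw [e1, hrowS v hv] at h
    linarith
  -- descent to first row
  have hdesc : ∀ n : ℕ, ∀ i j : Fin l, (i:ℕ) = n → (i:ℕ) ≤ (j:ℕ) →
      Ξ i j = Ξ z ⟨(j:ℕ) - (i:ℕ), Nat.lt_of_le_of_lt (Nat.sub_le _ _) j.isLt⟩ := by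
    intro n
    induction n with
    | zero =>
      intro i j hi hij
      have h1 : i = z := Fin.ext hi
      have h2 : (⟨(j:ℕ) - (i:ℕ), Nat.lt_of_le_of_lt (Nat.sub_le _ _) j.isLt⟩ : Fin l) = j :=
        Fin.ext (by simp [hi])
      rw [h2, h1]
    | succ n ih =>
      intro i j hi hij
      rw [hshift i j (by omega) (by omega),
        ih _ _ (by simp [hi]) (by simp; omega)]
      congr 1
      ext
      simp
      try omega
  -- the extended Toeplitz function
  set Z : ℤ → ℝ := fun m => if h : m.natAbs < l then Ξ z ⟨m.natAbs, h⟩ else 0 with hZdef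
  have hZe : ∀ m : ℤ, Z (-m) = Z m := by
    intro m
    simp [hZdef, Int.natAbs_neg]
  have hText : ∀ i j : Fin l, Ξ i j = Z (((j:ℕ):ℤ) - ((i:ℕ):ℤ)) := by
    intro i j
    rcases le_or_gt (i:ℕ) (j:ℕ) with h | h
    · rw [hdesc (i:ℕ) i j rfl h]
      simp only [hZdef]
      rw [dif_pos (by have := j.isLt; omega)]
      congr 1
      ext
      simp
      try omega
    · rw [hsymm.apply j i, hdesc (j:ℕ) j i rfl (le_of_lt h)]
      simp only [hZdef]
      rw [dif_pos (by have := i.isLt; omega)]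
      congr 1
      ext
      simp
      try omega
  have hζ : ∀ v : Fin l, Ξ z v = Z ((v:ℕ):ℤ) := by
    intro v
    rw [hText z v]
    congr 1
    try simp [hzv]
  -- equation (2): rows u ≥ 1
  have heq2 : ∀ v : Fin l, (v:ℕ) ≠ 0 →
      Z ((v:ℕ):ℤ) = -∑ p : Fin l, c p * Z (((v:ℕ):ℤ) - 1 - ((p:ℕ):ℤ)) := by
    intro v hv
    have h := hE z v
    rw [if_neg (by rintro ⟨-, h2⟩; exact hv (by rw [← h2])), add_zero] at h
    have e1 : (∑ q : Fin l, (∑ p : Fin l, A z p * Ξ p q) * A v q)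
        = ∑ q : Fin l, A v q * (-∑ p : Fin l, c p * Ξ p q) := by
      refine Finset.sum_congr rfl fun q _ => ?_
      rw [hrow0 (fun p => Ξ p q), mul_comm]
    rw [e1, hrowS v hv] at h
    have e2 : (∑ p : Fin l, c p *
          Ξ p ⟨(v:ℕ) - 1, Nat.lt_of_le_of_lt (Nat.sub_le _ _) v.isLt⟩)
        = ∑ p : Fin l, c p * Z (((v:ℕ):ℤ) - 1 - ((p:ℕ):ℤ)) := by
      refine Finset.sum_congr rfl fun p _ => ?_
      rw [hText p ⟨(v:ℕ) - 1, Nat.lt_of_le_of_lt (Nat.sub_le _ _) v.isLt⟩]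
      congr 2
      simp
      omega
    rw [e2] at h
    rw [← hζ v]
    linarith
  -- equation (3): corner
  have heq3 : ∑ p : Fin l, c p * ∑ q : Fin l, c q * Z (((p:ℕ):ℤ) - ((q:ℕ):ℤ))
      = Z 0 - 1 := by
    have h := hE z z
    rw [if_pos ⟨rfl, rfl⟩] at h
    have e1 : (∑ q : Fin l, (∑ p : Fin l, A z p * Ξ p q) * A z q)
        = ∑ q : Fin l, A z q * (-∑ p : Fin l, c p * Ξ p q) := by
      refine Finset.sum_congr rfl fun q _ => ?_
      rw [hrow0 (fun p => Ξ p q), mul_comm]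
    rw [e1, hrow0] at h
    have e2 : (∑ q : Fin l, c q * (-∑ p : Fin l, c p * Ξ p q))
        = -∑ q : Fin l, c q * ∑ p : Fin l, c p * Z (((q:ℕ):ℤ) - ((p:ℕ):ℤ)) := by
      rw [← Finset.sum_neg_distrib]
      refine Finset.sum_congr rfl fun q _ => ?_
      rw [show (∑ p : Fin l, c p * Ξ p q) = ∑ p : Fin l, c p * Z (((q:ℕ):ℤ) - ((p:ℕ):ℤ))
        from Finset.sum_congr rfl fun p _ => by rw [hText p q]]
      ring
    rw [e2, neg_neg] at h
    have e3 : Ξ z z = Z 0 := by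
      rw [hText z z]
      congr 1
      try simp
    rw [e3] at h
    linarith [h]
  -- the answer
  refine ⟨fun k => Ξ z k, ?_, ?_⟩
  · intro i j
    by_cases h : (i:ℕ) ≤ (j:ℕ)
    · rw [dif_pos h]
      exact hdesc (i:ℕ) i j rfl h
    · rw [dif_neg h, hsymm.apply j i]
      exact hdesc (j:ℕ) j i rfl (by omega)
  · funext u
    simp only [Matrix.mulVec, dotProduct, Pi.single_apply]
    have haIs : ∀ k : ℤ, (k < 1 ∨ (l : ℤ) < k) → CMAux.aI l c k = 0 := CMAux.aI_support c
    have hzc : ((z:ℕ):ℤ) = 0 := by rw [hzv]; rfl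
    by_cases hu : u = z
    · -- first row
      rw [hu, if_pos rfl]
      set Q : ℝ := ∑ k ∈ Finset.Icc (1:ℤ) (l:ℤ), (CMAux.aI l c k)^2 with hQ
      have hG : ∀ v : Fin l, contractionMatrix A z v * Ξ z v
          = -((∑ k ∈ Finset.Icc (1:ℤ) (l:ℤ), CMAux.aI l c k *
                (CMAux.aI l c (k - ((v:ℕ):ℤ)) + CMAux.aI l c (k + ((v:ℕ):ℤ)))) * Z ((v:ℕ):ℤ))
            + (if v = z then (1 + Q) * Z 0 else 0) := by
        intro v
        rw [CMAux.contraction_apply A c hpt z v, hζ v]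
        by_cases hv : v = z
        · rw [hv, if_pos ⟨hzv, hzv⟩, if_pos rfl]
          have harg : (∑ k ∈ Finset.Icc (1:ℤ) (l:ℤ), CMAux.aI l c k *
              (CMAux.aI l c (k - ((z:ℕ):ℤ)) + CMAux.aI l c (k + ((z:ℕ):ℤ))))
              = 2 * Q := by
            rw [hQ, Finset.mul_sum]
            refine Finset.sum_congr rfl fun k _ => ?_
            rw [show k - ((z:ℕ):ℤ) = k from by rw [hzc]; ring,
              show k + ((z:ℕ):ℤ) = k from by rw [hzc]; ring]
            ring
          rw [harg, hzc]
          ring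
        · rw [if_neg (fun hh => hv (Fin.ext (by rw [hh.2, hzv]))),
            if_pos hzv, if_neg hv, add_zero]
          ring
      rw [Finset.sum_congr rfl (fun v _ => hG v), Finset.sum_add_distrib,
        Finset.sum_ite_eq' Finset.univ z (fun _ => (1 + Q) * Z 0),
        if_pos (Finset.mem_univ z)]
      have hT : ∑ v : Fin l, -((∑ k ∈ Finset.Icc (1:ℤ) (l:ℤ), CMAux.aI l c k *
            (CMAux.aI l c (k - ((v:ℕ):ℤ)) + CMAux.aI l c (k + ((v:ℕ):ℤ)))) * Z ((v:ℕ):ℤ))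
          = -(Q * Z 0 + (Z 0 - 1)) := by
        rw [Finset.sum_neg_distrib]
        have swap : ∑ v : Fin l, (∑ k ∈ Finset.Icc (1:ℤ) (l:ℤ), CMAux.aI l c k *
              (CMAux.aI l c (k - ((v:ℕ):ℤ)) + CMAux.aI l c (k + ((v:ℕ):ℤ)))) * Z ((v:ℕ):ℤ)
            = ∑ k ∈ Finset.Icc (1:ℤ) (l:ℤ), CMAux.aI l c k *
              ∑ v : Fin l, (CMAux.aI l c (k - ((v:ℕ):ℤ)) + CMAux.aI l c (k + ((v:ℕ):ℤ)))
                * Z ((v:ℕ):ℤ) := by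
          calc ∑ v : Fin l, (∑ k ∈ Finset.Icc (1:ℤ) (l:ℤ), CMAux.aI l c k *
                  (CMAux.aI l c (k - ((v:ℕ):ℤ)) + CMAux.aI l c (k + ((v:ℕ):ℤ))))
                  * Z ((v:ℕ):ℤ)
              = ∑ v : Fin l, ∑ k ∈ Finset.Icc (1:ℤ) (l:ℤ), CMAux.aI l c k *
                  (CMAux.aI l c (k - ((v:ℕ):ℤ)) + CMAux.aI l c (k + ((v:ℕ):ℤ)))
                  * Z ((v:ℕ):ℤ) :=
                Finset.sum_congr rfl fun v _ => Finset.sum_mul _ _ _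
            _ = ∑ k ∈ Finset.Icc (1:ℤ) (l:ℤ), ∑ v : Fin l, CMAux.aI l c k *
                  (CMAux.aI l c (k - ((v:ℕ):ℤ)) + CMAux.aI l c (k + ((v:ℕ):ℤ)))
                  * Z ((v:ℕ):ℤ) := Finset.sum_comm
            _ = ∑ k ∈ Finset.Icc (1:ℤ) (l:ℤ), CMAux.aI l c k *
                  ∑ v : Fin l, (CMAux.aI l c (k - ((v:ℕ):ℤ))
                    + CMAux.aI l c (k + ((v:ℕ):ℤ))) * Z ((v:ℕ):ℤ) := by
                refine Finset.sum_congr rfl fun k _ => ?_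
                rw [Finset.mul_sum]
                refine Finset.sum_congr rfl fun v _ => ?_
                ring
        rw [swap]
        have hk : ∀ k ∈ Finset.Icc (1:ℤ) (l:ℤ),
            CMAux.aI l c k * (∑ v : Fin l, (CMAux.aI l c (k - ((v:ℕ):ℤ))
                + CMAux.aI l c (k + ((v:ℕ):ℤ))) * Z ((v:ℕ):ℤ))
              = (CMAux.aI l c k)^2 * Z 0
                + CMAux.aI l c k * ∑ q : Fin l, c q * Z (k - 1 - ((q:ℕ):ℤ)) := by
          intro k hkm
          simp only [Finset.mem_Icc] at hkm
          have hkey := CMAux.key (CMAux.aI l c) Z haIs hZe k hkm.1 hkm.2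
          have e : ∑ q : Fin l, CMAux.aI l c (((q:ℕ):ℤ) + 1) * Z (k - (((q:ℕ):ℤ) + 1))
              = ∑ q : Fin l, c q * Z (k - 1 - ((q:ℕ):ℤ)) := by
            refine Finset.sum_congr rfl fun q _ => ?_
            rw [CMAux.aI_succ]
            congr 1
            ring
          rw [e] at hkey
          have hv : (∑ v : Fin l, (CMAux.aI l c (k - ((v:ℕ):ℤ))
              + CMAux.aI l c (k + ((v:ℕ):ℤ))) * Z ((v:ℕ):ℤ))
              = CMAux.aI l c k * Z 0 + ∑ q : Fin l, c q * Z (k - 1 - ((q:ℕ):ℤ)) := by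
            linarith
          rw [hv]
          ring
        rw [Finset.sum_congr rfl hk, Finset.sum_add_distrib, ← Finset.sum_mul, ← hQ]
        have hU : ∑ k ∈ Finset.Icc (1:ℤ) (l:ℤ), CMAux.aI l c k *
              ∑ q : Fin l, c q * Z (k - 1 - ((q:ℕ):ℤ))
            = Z 0 - 1 := by
          rw [CMAux.sum_Icc_one_fin
            (fun k => CMAux.aI l c k * ∑ q : Fin l, c q * Z (k - 1 - ((q:ℕ):ℤ))), ← heq3]
          refine Finset.sum_congr rfl fun p _ => ?_
          rw [CMAux.aI_succ]
          congr 1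
          refine Finset.sum_congr rfl fun q _ => ?_
          congr 1
          ring
        rw [hU]
      rw [hT]
      ring
    · -- other rows
      have hu0 : (u:ℕ) ≠ 0 := fun h => hu (by ext; omega)
      rw [if_neg hu]
      have hG : ∀ v : Fin l, contractionMatrix A u v * Ξ z v
          = (if v = u then (1:ℝ) else 0) * Z ((v:ℕ):ℤ)
            + (CMAux.aI l c (((u:ℕ):ℤ) - ((v:ℕ):ℤ))
                + CMAux.aI l c (((u:ℕ):ℤ) + ((v:ℕ):ℤ))) * Z ((v:ℕ):ℤ)
            + (if v = z then -(CMAux.aI l c ((u:ℕ):ℤ) * Z 0) else 0) := by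
        intro v
        rw [CMAux.contraction_apply A c hpt u v, hζ v]
        rw [if_neg (fun hh => hu0 hh.1), if_neg hu0]
        by_cases hv : v = z
        · have hv0 : (v:ℕ) = 0 := by rw [hv]
          rw [if_pos hv0]
          rw [if_pos hv]
          rw [if_neg (show ¬ v = u from fun hh => hu (hh.symm.trans hv))]
          rw [show ((v:ℕ):ℤ) = 0 from by rw [hv0]; rfl]
          rw [show ((u:ℕ):ℤ) - 0 = ((u:ℕ):ℤ) from by ring,
            show ((u:ℕ):ℤ) + 0 = ((u:ℕ):ℤ) from by ring]
          ring
        · have hv0 : (v:ℕ) ≠ 0 := fun h => hv (by ext; omega)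
          rw [if_neg hv0, if_neg hv, add_zero]
          by_cases hvu : v = u
          · rw [if_pos hvu.symm, if_pos hvu]
            rw [← hvu]
            rw [show ((v:ℕ):ℤ) - ((v:ℕ):ℤ) = 0 from by ring,
              haIs 0 (Or.inl (by norm_num)),
              show ((v:ℕ):ℤ) + ((v:ℕ):ℤ) = 2 * ((v:ℕ):ℤ) from by ring]
            ring
          · rw [if_neg (fun hh : u = v => hvu hh.symm), if_neg hvu]
            ring
      rw [Finset.sum_congr rfl (fun v _ => hG v), Finset.sum_add_distrib,
        Finset.sum_add_distrib]
      have hsum1 : ∑ v : Fin l, (if v = u then (1:ℝ) else 0) * Z ((v:ℕ):ℤ)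
          = Z ((u:ℕ):ℤ) := by
        rw [Finset.sum_congr rfl (fun v _ => show (if v = u then (1:ℝ) else 0) * Z ((v:ℕ):ℤ)
            = (if v = u then Z ((v:ℕ):ℤ) else 0) from by split_ifs <;> ring),
          Finset.sum_ite_eq' Finset.univ u (fun v => Z ((v:ℕ):ℤ)),
          if_pos (Finset.mem_univ u)]
      have hsum3 : ∑ v : Fin l, (if v = z then -(CMAux.aI l c ((u:ℕ):ℤ) * Z 0) else 0)
          = -(CMAux.aI l c ((u:ℕ):ℤ) * Z 0) := by
        rw [Finset.sum_ite_eq' Finset.univ z (fun _ => -(CMAux.aI l c ((u:ℕ):ℤ) * Z 0)),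
          if_pos (Finset.mem_univ z)]
      rw [hsum1, hsum3]
      have hkey := CMAux.key (CMAux.aI l c) Z haIs hZe ((u:ℕ):ℤ)
        (by omega) (by have := u.isLt; omega)
      have e : ∑ q : Fin l, CMAux.aI l c (((q:ℕ):ℤ) + 1) * Z (((u:ℕ):ℤ) - (((q:ℕ):ℤ) + 1))
          = ∑ p : Fin l, c p * Z (((u:ℕ):ℤ) - 1 - ((p:ℕ):ℤ)) := by
        refine Finset.sum_congr rfl fun q _ => ?_
        rw [CMAux.aI_succ]
        congr 1
        ring
      have h2 := heq2 u hu0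
      rw [e] at hkey
      linarith
end

section
/- Let A be an l×l real matrix all of whose complex eigenvalues have modulus strictly less than 1, and let C be an l×l real positive semidefinite matrix. Then the series Σ = Σ_{k=0}^∞ A^k C (Aᵀ)^k converges, Σ is positive semidefinite, and Σ satisfies the discrete-type Lyapunov equation A Σ Aᵀ − Σ + C = O. -/
open Matrix


section Aux

open scoped NNReal ENNReal

attribute [local instance] Matrix.linftyOpNormedRing Matrix.linftyOpNormedAlgebra

lemma linfty_entry_le {l : ℕ} (M : Matrix (Fin l) (Fin l) ℂ) (i j : Fin l) :
    ‖M i j‖ ≤ ‖M‖ := by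
  have h : ‖M i j‖₊ ≤ ‖M‖₊ := by
    rw [Matrix.linfty_opNNNorm_def]
    exact le_trans
      (Finset.single_le_sum (f := fun j => ‖M i j‖₊) (fun _ _ => zero_le) (Finset.mem_univ j))
      (Finset.le_sup (f := fun i => ∑ j, ‖M i j‖₊) (Finset.mem_univ i))
  exact_mod_cast h

lemma pow_entry_bound {l : ℕ} (A : Matrix (Fin l) (Fin l) ℝ) (hl : 0 < l)
    (hA : ∀ s : ℂ, (A.map (fun x => (x : ℂ))).charpoly.IsRoot s → ‖s‖ < 1) :
    ∃ r : ℝ, 0 ≤ r ∧ r < 1 ∧ ∃ N : ℕ, ∀ k, N ≤ k → ∀ i j, |(A ^ k) i j| ≤ r ^ k := by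
  haveI : Nonempty (Fin l) := Fin.pos_iff_nonempty.mp hl
  haveI : Nontrivial (Matrix (Fin l) (Fin l) ℂ) := by
    refine ⟨0, 1, fun h => ?_⟩
    have := congrFun (congrFun h ⟨0, hl⟩) ⟨0, hl⟩
    simp at this
  set A' : Matrix (Fin l) (Fin l) ℂ := A.map (fun x => (x : ℂ)) with hA'def
  have hspec : ∀ z ∈ spectrum ℂ A', ‖z‖₊ < 1 := by
    intro z hz
    have h1 : ¬ IsUnit (algebraMap ℂ (Matrix (Fin l) (Fin l) ℂ) z - A') :=
      spectrum.mem_iff.mp hz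
    have hdet : (algebraMap ℂ (Matrix (Fin l) (Fin l) ℂ) z - A').det = 0 := by
      by_contra hd
      exact h1 ((Matrix.isUnit_iff_isUnit_det _).mpr (isUnit_iff_ne_zero.mpr hd))
    have heval : A'.charpoly.eval z = (algebraMap ℂ (Matrix (Fin l) (Fin l) ℂ) z - A').det := by
      rw [Matrix.charpoly, _root_.eval_det, matPolyEquiv_charmatrix]
      rw [Polynomial.eval_sub, Polynomial.eval_X, Polynomial.eval_C]
      rfl
    have hroot : A'.charpoly.IsRoot z := by
      rw [Polynomial.IsRoot, heval, hdet]
    have h2 : ‖z‖ < 1 := by exact hA z hroot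
    rwa [← coe_nnnorm, show ((1:ℝ)) = ((1:ℝ≥0):ℝ) from rfl, NNReal.coe_lt_coe] at h2
  have h1 : spectralRadius ℂ A' < 1 := by
    have := spectrum.spectralRadius_lt_of_forall_lt (a := A') (r := 1) hspec
    simpa using this
  obtain ⟨r, hr1, hr2⟩ := ENNReal.lt_iff_exists_nnreal_btwn.mp h1
  have hrlt1 : (r : ℝ) < 1 := by exact_mod_cast hr2
  have hgel := spectrum.pow_nnnorm_pow_one_div_tendsto_nhds_spectralRadius A'
  have hev : ∀ᶠ (n : ℕ) in Filter.atTop, (‖A' ^ n‖₊ : ℝ≥0∞) ^ (1 / (n:ℕ) : ℝ) < (r : ℝ≥0∞) :=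
    hgel.eventually_lt_const hr1
  obtain ⟨N, hN⟩ := Filter.eventually_atTop.mp hev
  refine ⟨r, r.coe_nonneg, hrlt1, max N 1, fun k hk i j => ?_⟩
  have hk1 : 1 ≤ k := le_trans (le_max_right _ _) hk
  have hkN : N ≤ k := le_trans (le_max_left _ _) hk
  have hnorm : ‖A' ^ k‖ ≤ (r:ℝ) ^ k := by
    have h3 := hN k hkN
    have hkpos : (0:ℝ) < k := by exact_mod_cast hk1
    have h4 := ENNReal.rpow_lt_rpow h3 hkpos
    rw [← ENNReal.rpow_mul, one_div, inv_mul_cancel₀ (ne_of_gt hkpos), ENNReal.rpow_one,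
      ENNReal.rpow_natCast, ← ENNReal.coe_pow, ENNReal.coe_lt_coe] at h4
    calc ‖A' ^ k‖ = ((‖A' ^ k‖₊ : ℝ≥0) : ℝ) := (coe_nnnorm _).symm
    _ ≤ ((r ^ k : ℝ≥0) : ℝ) := by exact_mod_cast h4.le
    _ = (r:ℝ) ^ k := by push_cast; ring
  have hmap : A' ^ k = (A ^ k).map (fun x => (x : ℂ)) := by
    have : (fun x : ℝ => (x : ℂ)) = ⇑(algebraMap ℝ ℂ) := by funext x; simp
    rw [hA'def, this, ← RingHom.mapMatrix_apply, ← RingHom.mapMatrix_apply, ← map_pow]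
  have hentry : |(A ^ k) i j| = ‖(A' ^ k) i j‖ := by
    rw [hmap]
    simp [Matrix.map_apply, Complex.norm_real, Real.norm_eq_abs]
  rw [hentry]
  exact le_trans (linfty_entry_le _ i j) hnorm

end Aux


/-- If all complex eigenvalues of the real `l × l` matrix `A` have modulus
strictly less than 1 and `C` is positive semidefinite, then the series
`∑_{k=0}^∞ A^k C (Aᵀ)^k` converges to a positive semidefinite matrix `S` satisfying the
discrete-type Lyapunov equation `A S Aᵀ - S + C = 0`. -/
theorem lyapunov_series_solution {l : ℕ}
    (A C : Matrix (Fin l) (Fin l) ℝ)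
    (hA : ∀ s : ℂ, (A.map (fun x => (x : ℂ))).charpoly.IsRoot s → ‖s‖ < 1)
    (hC : C.PosSemidef) :
    ∃ S : Matrix (Fin l) (Fin l) ℝ,
      HasSum (fun k : ℕ => A ^ k * C * (Aᵀ) ^ k) S ∧
      S.PosSemidef ∧ A * S * Aᵀ - S + C = 0 := by
  rcases Nat.eq_zero_or_pos l with hl | hl
  · subst hl
    haveI : Subsingleton (Matrix (Fin 0) (Fin 0) ℝ) :=
      ⟨fun M N => by ext i j; exact i.elim0⟩
    refine ⟨0, ?_, ?_, ?_⟩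
    · have h : (fun k : ℕ => A ^ k * C * (Aᵀ) ^ k) = fun _ => (0 : Matrix (Fin 0) (Fin 0) ℝ) :=
        funext fun k => Subsingleton.elim _ _
      rw [h]; exact hasSum_zero
    · exact ⟨Subsingleton.elim _ _, fun x => by simp [Subsingleton.elim (x) (0 : Fin 0 →₀ ℝ)]⟩
    · exact Subsingleton.elim _ _
  · obtain ⟨r, hr0, hr1, N, hb⟩ := pow_entry_bound A hl hA
    set T : ℕ → Matrix (Fin l) (Fin l) ℝ := fun k => A ^ k * C * (Aᵀ) ^ k with hT
    -- entry formula
    have hTentry : ∀ (k : ℕ) (i j : Fin l),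
        T k i j = ∑ q, (∑ p, (A ^ k) i p * C p q) * (A ^ k) j q := by
      intro k i j
      simp [hT, Matrix.mul_apply, ← Matrix.transpose_pow, Matrix.transpose_apply]
    -- summability of entries
    set BC : ℝ := ∑ p, ∑ q, |C p q| with hBC
    have hBC0 : 0 ≤ BC := Finset.sum_nonneg fun _ _ => Finset.sum_nonneg fun _ _ => abs_nonneg _
    have hbound : ∀ k, N ≤ k → ∀ i j, |T k i j| ≤ BC * (r ^ 2) ^ k := by
      intro k hk i j
      have hrk : ∀ i j, |(A ^ k) i j| ≤ r ^ k := hb k hk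
      calc |T k i j| = |∑ q, ∑ p, (A ^ k) i p * C p q * (A ^ k) j q| := by
            rw [hTentry k i j]; congr 1; exact Finset.sum_congr rfl fun q _ => by
              rw [Finset.sum_mul]
        _ ≤ ∑ q, ∑ p, |(A ^ k) i p * C p q * (A ^ k) j q| :=
            (Finset.abs_sum_le_sum_abs _ _).trans (Finset.sum_le_sum fun q _ =>
              Finset.abs_sum_le_sum_abs _ _)
        _ ≤ ∑ q, ∑ p, r ^ k * |C p q| * r ^ k := by
            refine Finset.sum_le_sum fun q _ => Finset.sum_le_sum fun p _ => ?_
            rw [abs_mul, abs_mul]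
            have h1 : 0 ≤ r ^ k := pow_nonneg hr0 k
            exact mul_le_mul (mul_le_mul (hrk i p) le_rfl (abs_nonneg _)
              (le_trans (abs_nonneg _) (hrk i p)))
              (hrk j q) (abs_nonneg _) (by positivity)
        _ = BC * (r ^ 2) ^ k := by
            rw [hBC]
            rw [← Finset.sum_comm]
            rw [Finset.sum_mul]
            refine Finset.sum_congr rfl fun p _ => ?_
            rw [Finset.sum_mul]
            refine Finset.sum_congr rfl fun q _ => ?_
            rw [← pow_mul, mul_comm 2 k, pow_mul]
            ring
    have hr2 : r ^ 2 < 1 := by nlinarith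
    have hgeo : Summable (fun k : ℕ => BC * (r ^ 2) ^ k) :=
      (summable_geometric_of_lt_one (by positivity) hr2).mul_left BC
    have hsum : ∀ i j, Summable (fun k => T k i j) := by
      intro i j
      refine Summable.of_norm_bounded_eventually_nat hgeo ?_
      filter_upwards [Filter.eventually_atTop.mpr ⟨N, fun k hk => hbound k hk i j⟩] with k h
      simpa [Real.norm_eq_abs] using h
    set S : Matrix (Fin l) (Fin l) ℝ := Matrix.of fun i j => ∑' k, T k i j with hS'
    have hSentry : ∀ i j, S i j = ∑' k, T k i j := fun i j => rfl
    have hS : HasSum T S :=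
      Pi.hasSum.mpr fun i => Pi.hasSum.mpr fun j => (hsum i j).hasSum
    have hTk : ∀ k, (T k).PosSemidef := by
      intro k
      have h := hC.mul_mul_conjTranspose_same (B := A ^ k)
      rwa [Matrix.conjTranspose_eq_transpose_of_trivial, Matrix.transpose_pow] at h
    have hTsymm : ∀ k (i j : Fin l), T k j i = T k i j := by
      intro k i j
      have h := congrFun (congrFun (hTk k).1 i) j
      simpa [Matrix.conjTranspose_apply] using h
    refine ⟨S, hS, posSemidef_iff_dotProduct_mulVec.mpr ⟨?_, ?_⟩, ?_⟩
    · -- IsHermitian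
      ext i j
      simp only [Matrix.conjTranspose_apply, star_trivial]
      rw [hSentry, hSentry]
      exact tsum_congr fun k => hTsymm k i j
    · -- nonneg quadratic form
      intro x
      have h1 : ∀ i j : Fin l, HasSum (fun k => x i * (T k i j * x j)) (x i * (S i j * x j)) :=
        fun i j => (((hsum i j).hasSum).mul_right (x j)).mul_left (x i)
      have h2 : HasSum (fun k => ∑ i, ∑ j, x i * (T k i j * x j))
          (∑ i, ∑ j, x i * (S i j * x j)) :=
        hasSum_sum fun i _ => hasSum_sum fun j _ => h1 i j
      have hdot : ∀ (M : Matrix (Fin l) (Fin l) ℝ),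
          dotProduct x (M *ᵥ x) = ∑ i, ∑ j, x i * (M i j * x j) := by
        intro M
        simp [dotProduct, Matrix.mulVec, Finset.mul_sum]
      have h3 : 0 ≤ ∑ i, ∑ j, x i * (S i j * x j) := by
        refine h2.nonneg fun k => ?_
        rw [← hdot (T k)]
        have := (hTk k).dotProduct_mulVec_nonneg x
        simpa using this
      rw [star_trivial, hdot S]
      exact h3
    · -- Lyapunov equation
      have hcont1 : Continuous (fun X : Matrix (Fin l) (Fin l) ℝ => A * X) :=
        continuous_const.matrix_mul continuous_id
      have hcont2 : Continuous (fun X : Matrix (Fin l) (Fin l) ℝ => X * Aᵀ) :=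
        continuous_id.matrix_mul continuous_const
      have h1 : HasSum (fun k => A * T k) (A * S) := by
        have := hS.map (AddMonoidHom.mulLeft A) hcont1
        simpa [Function.comp_def] using this
      have h2 : HasSum (fun k => A * T k * Aᵀ) (A * S * Aᵀ) := by
        have := h1.map (AddMonoidHom.mulRight Aᵀ) hcont2
        simpa [Function.comp_def] using this
      have hTsucc : (fun k => A * T k * Aᵀ) = fun k => T (k + 1) := by
        funext k
        rw [hT]
        show A * (A ^ k * C * (Aᵀ) ^ k) * Aᵀ = A ^ (k+1) * C * (Aᵀ) ^ (k+1)
        rw [pow_succ' A, pow_succ Aᵀ]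
        simp only [Matrix.mul_assoc]
      rw [hTsucc] at h2
      have hshift : HasSum (fun k => T (k + 1)) (S - C) := by
        have h3 := (hasSum_nat_add_iff' (f := T) 1).mpr hS
        simpa [hT] using h3
      have key : A * S * Aᵀ = S - C := h2.unique hshift
      rw [key]
      abel
end

section
/- Let C = (c_{ij}) be an l×l real matrix (l ≥ 2) satisfying c_{j+1,j} ≠ 0 for all j = 1,…,l−1 and c_{ij} = 0 whenever i > j+1, let β = (0,…,0,1) ∈ ℝ^{1×l}, and let D be the l×l matrix whose i-th row is β C^{l−i} for i = 1,…,l. Then det D = ∏_{j=1}^{l−1} c_{j+1,j}^{ j}; in particular det D ≠ 0. -/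
open Matrix

theorem hess_pow_zero {l : ℕ} (C : Matrix (Fin l) (Fin l) ℝ)
    (hzero : ∀ i j : Fin l, (j : ℕ) + 1 < (i : ℕ) → C i j = 0) :
    ∀ k : ℕ, ∀ i j : Fin l, (j : ℕ) + k < (i : ℕ) → (C ^ k) i j = 0 := by
  intro k
  induction k with
  | zero =>
    intro i j h
    simp only [pow_zero, Matrix.one_apply]
    rw [if_neg]
    intro hij; subst hij; omega
  | succ k ih =>
    intro i j h
    rw [pow_succ, Matrix.mul_apply]
    apply Finset.sum_eq_zero
    intro x _
    by_cases hx : (x : ℕ) + k < (i : ℕ)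
    · rw [ih i x hx, zero_mul]
    · rw [hzero x j (by omega), mul_zero]

theorem hess_pow_diag {l : ℕ} (C : Matrix (Fin l) (Fin l) ℝ)
    (hzero : ∀ i j : Fin l, (j : ℕ) + 1 < (i : ℕ) → C i j = 0) :
    ∀ k : ℕ, ∀ i j : Fin l, (j : ℕ) + k = (i : ℕ) →
      (C ^ k) i j = ∏ m ∈ Finset.Ico (j : ℕ) ((j : ℕ) + k),
        (if h : m + 1 < l then C ⟨m + 1, h⟩ ⟨m, Nat.lt_of_succ_lt h⟩ else 1) := by
  intro k
  induction k with
  | zero =>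
    intro i j h
    have hij : i = j := Fin.ext (by omega)
    subst hij
    simp [pow_zero, Matrix.one_apply_eq]
  | succ k ih =>
    intro i j h
    have hi := i.isLt
    have hj1 : (j : ℕ) + 1 < l := by omega
    rw [pow_succ, Matrix.mul_apply]
    rw [Finset.sum_eq_single (⟨(j : ℕ) + 1, hj1⟩ : Fin l)]
    · rw [ih i ⟨(j : ℕ) + 1, hj1⟩ (show (j : ℕ) + 1 + k = (i : ℕ) by omega)]
      have hb : (j : ℕ) + (k + 1) = (j : ℕ) + 1 + k := by omega
      rw [Finset.prod_eq_prod_Ico_succ_bot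
        (show (j : ℕ) < (j : ℕ) + (k + 1) by omega), hb, mul_comm]
      congr 1
      rw [dif_pos hj1]
    · intro b _ hb
      by_cases hx : (b : ℕ) + k < (i : ℕ)
      · rw [hess_pow_zero C hzero k i b hx, zero_mul]
      · have hbv : (b : ℕ) ≠ (j : ℕ) + 1 := fun hc => hb (Fin.ext hc)
        rw [hzero b j (by omega), mul_zero]
    · intro hx
      exact absurd (Finset.mem_univ _) hx

/-- Let `C` be an `l × l` real matrix (`l ≥ 2`) with nonzero first subdiagonal
entries and zero entries strictly below the first subdiagonal, `β = (0,…,0,1)` the last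
standard basis row vector, and `D` the matrix whose `i`-th row is `β C^{l-i}`. Then
`det D = ∏_{j=1}^{l-1} c_{j+1,j}^j` (1-based indexing); in particular `det D ≠ 0`. -/
theorem hessenberg_krylov_det {l : ℕ} (hl : 2 ≤ l)
    (C : Matrix (Fin l) (Fin l) ℝ)
    (hsub : ∀ j : ℕ, ∀ h : j + 1 < l, C ⟨j + 1, h⟩ ⟨j, by omega⟩ ≠ 0)
    (hzero : ∀ i j : Fin l, (j : ℕ) + 1 < (i : ℕ) → C i j = 0)
    (D : Matrix (Fin l) (Fin l) ℝ)
    (hD : ∀ i j : Fin l, D i j = (C ^ (l - 1 - (i : ℕ))) ⟨l - 1, by omega⟩ j) :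
    D.det = (∏ j ∈ Finset.Ico 1 l,
        (if h : j < l ∧ 1 ≤ j then C ⟨j, h.1⟩ ⟨j - 1, by omega⟩ else 1) ^ j) ∧
    D.det ≠ 0 := by
  set a : ℕ → ℝ := fun m => if h : m + 1 < l then C ⟨m + 1, h⟩ ⟨m, by omega⟩ else 1 with ha
  have hane : ∀ m, m + 1 < l → a m ≠ 0 := by
    intro m hm
    simp only [ha, dif_pos hm]
    exact hsub m hm
  have hDzero : ∀ i j : Fin l, (j : ℕ) < (i : ℕ) → D i j = 0 := by
    intro i j h
    have hi := i.isLt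
    rw [hD]
    exact hess_pow_zero C hzero _ _ _
      (show (j : ℕ) + (l - 1 - (i : ℕ)) < l - 1 by omega)
  have hDdiag : ∀ i : Fin l, D i i = ∏ m ∈ Finset.Ico (i : ℕ) (l - 1), a m := by
    intro i
    have hi := i.isLt
    rw [hD]
    rw [hess_pow_diag C hzero (l - 1 - (i : ℕ)) ⟨l - 1, by omega⟩ i
      (show (i : ℕ) + (l - 1 - (i : ℕ)) = l - 1 by omega)]
    rw [show (i : ℕ) + (l - 1 - (i : ℕ)) = l - 1 by omega]
  have hdet : D.det = ∏ i : Fin l, D i i := by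
    apply Matrix.det_of_upperTriangular
    intro i j hij
    exact hDzero i j hij
  have key : D.det = ∏ m ∈ Finset.range (l - 1), a m ^ (m + 1) := by
    rw [hdet]
    calc ∏ i : Fin l, D i i
        = ∏ i ∈ Finset.range l, ∏ m ∈ Finset.Ico i (l - 1), a m := by
          rw [← Fin.prod_univ_eq_prod_range (fun i => ∏ m ∈ Finset.Ico i (l - 1), a m) l]
          exact Finset.prod_congr rfl (fun i _ => hDdiag i)
      _ = ∏ m ∈ Finset.range (l - 1), ∏ i ∈ Finset.range (m + 1), a m := by
          apply Finset.prod_comm'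
          intro i m
          simp only [Finset.mem_range, Finset.mem_Ico]
          omega
      _ = ∏ m ∈ Finset.range (l - 1), a m ^ (m + 1) := by
          apply Finset.prod_congr rfl
          intro m _
          rw [Finset.prod_const, Finset.card_range]
  have htarget : (∏ j ∈ Finset.Ico 1 l,
      (if h : j < l ∧ 1 ≤ j then C ⟨j, h.1⟩ ⟨j - 1, by omega⟩ else 1) ^ j)
      = ∏ m ∈ Finset.range (l - 1), a m ^ (m + 1) := by
    rw [Finset.prod_Ico_eq_prod_range]
    apply Finset.prod_congr rfl
    intro m hm
    simp only [Finset.mem_range] at hm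
    have h1 : 1 + m < l ∧ 1 ≤ 1 + m := ⟨by omega, by omega⟩
    have hval : a m = C ⟨1 + m, h1.1⟩ ⟨1 + m - 1, by omega⟩ := by
      simp only [ha, dif_pos (show m + 1 < l by omega)]
      have e1 : (⟨m + 1, show m + 1 < l by omega⟩ : Fin l) = ⟨1 + m, h1.1⟩ :=
        Fin.ext (show m + 1 = 1 + m by omega)
      have e2 : (⟨m, show m < l by omega⟩ : Fin l) = ⟨1 + m - 1, by omega⟩ :=
        Fin.ext (show m = 1 + m - 1 by omega)
      rw [e1, e2]
    rw [dif_pos h1, ← hval]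
    congr 1
    omega
  refine ⟨by rw [key, htarget], ?_⟩
  rw [key]
  apply Finset.prod_ne_zero_iff.mpr
  intro m hm
  simp only [Finset.mem_range] at hm
  exact pow_ne_zero _ (hane m (by omega))
end

section
/- Let θ > 0, n, N ∈ ℕ, ε > 0. Let Φ : ℝ → ℝ^{n×n} be continuous with Φ(t) invertible for every t and satisfying Φ(t+θ) = Φ(t)·Φ(θ) for all t ≥ 0. Let Γ : ℝ → ℝ^{n×N} be continuous and θ-periodic, i.e., Γ(t+θ) = Γ(t) for all t. Suppose the real symmetric n×n matrix Σ₀ satisfies the discrete-type Lyapunov equation Φ(θ) Σ₀ Φ(θ)ᵀ − Σ₀ + ε ∫₀^θ (Φ(θ)Φ(s)⁻¹Γ(s)) (Φ(θ)Φ(s)⁻¹Γ(s))ᵀ ds = O. Define Σ(t) = Φ(t) [ Σ₀ + ε ∫₀^t (Φ(s)⁻¹Γ(s)) (Φ(s)⁻¹Γ(s))ᵀ ds ] Φ(t)ᵀ. Then Σ(t+θ) = Σ(t) for all t ≥ 0. -/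
/-! With `F(s) = Φ(s)⁻¹Γ(s)(Φ(s)⁻¹Γ(s))ᵀ`, the semigroup law of `Φ` and the periodicity of `Γ`
give `F(s + θ) = Φ(θ)⁻¹ F(s) Φ(θ)⁻ᵀ` for `s ≥ 0`, hence
`∫₀^{t+θ} F = ∫₀^θ F + Φ(θ)⁻¹ (∫₀^t F) Φ(θ)⁻ᵀ`. Substituting this into
`Σ(t + θ) = Φ(t) Φ(θ) [Σ₀ + ε ∫₀^{t+θ} F] Φ(θ)ᵀ Φ(t)ᵀ`, the inverse factors cancel and what is left
of the middle is `Φ(θ) (Σ₀ + ε ∫₀^θ F) Φ(θ)ᵀ + ε ∫₀^t F`, which the Lyapunov equation turns into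
`Σ₀ + ε ∫₀^t F`. -/

open Matrix

/-- The entrywise (interval) integral of a matrix-valued function. -/
noncomputable def entryIntegral {n N : ℕ} (f : ℝ → Matrix (Fin n) (Fin N) ℝ) (a b : ℝ) :
    Matrix (Fin n) (Fin N) ℝ :=
  Matrix.of fun i j => ∫ s in a..b, f s i j

open MeasureTheory

theorem Continuous.matrix_inv_of_isUnit_det {X K ι : Type*} [TopologicalSpace X] [Field K]
    [TopologicalSpace K] [IsTopologicalRing K] [ContinuousInv₀ K] [Fintype ι] [DecidableEq ι]
    {A : X → Matrix ι ι K} (hA : Continuous A) (hdet : ∀ x, IsUnit (A x).det) :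
    Continuous fun x => (A x)⁻¹ := by
  refine continuous_iff_continuousAt.2 fun x => (continuousAt_matrix_inv _ ?_).comp hA.continuousAt
  rw [Ring.inverse_eq_inv']
  exact continuousAt_inv₀ (hdet x).ne_zero

theorem Matrix.mul_add_inv_conj_mul_transpose {ι R : Type*} [Fintype ι] [DecidableEq ι]
    [CommRing R] {P : Matrix ι ι R} (hP : IsUnit P.det) (X Y : Matrix ι ι R) :
    P * (X + P⁻¹ * Y * P⁻¹ᵀ) * Pᵀ = P * X * Pᵀ + Y := by
  have hPT : P⁻¹ᵀ * Pᵀ = 1 := by rw [← transpose_mul, mul_nonsing_inv P hP, transpose_one]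
  rw [Matrix.mul_add, Matrix.add_mul, ← Matrix.mul_assoc P, ← Matrix.mul_assoc P,
    mul_nonsing_inv P hP, Matrix.one_mul, Matrix.mul_assoc Y, hPT, Matrix.mul_one]

section entryIntegral

variable {m n p : ℕ} {a b : ℝ}

theorem intervalIntegrable_matrix_mul_apply {A : Matrix (Fin m) (Fin n) ℝ}
    {f : ℝ → Matrix (Fin n) (Fin p) ℝ}
    (hf : ∀ i j, IntervalIntegrable (fun s => f s i j) volume a b) (i : Fin m) (j : Fin p) :
    IntervalIntegrable (fun s => (A * f s) i j) volume a b := by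
  have := IntervalIntegrable.sum Finset.univ fun k _ => (hf k j).const_mul (A i k)
  simpa only [mul_apply, Finset.sum_fn] using this

theorem entryIntegral_mul_left (A : Matrix (Fin m) (Fin n) ℝ) {f : ℝ → Matrix (Fin n) (Fin p) ℝ}
    (hf : ∀ i j, IntervalIntegrable (fun s => f s i j) volume a b) :
    entryIntegral (fun s => A * f s) a b = A * entryIntegral f a b := by
  ext i j
  simp only [entryIntegral, of_apply, mul_apply]
  rw [intervalIntegral.integral_finsetSum fun k _ => (hf k j).const_mul _]
  simp only [intervalIntegral.integral_const_mul]

theorem entryIntegral_mul_right {f : ℝ → Matrix (Fin m) (Fin n) ℝ} (B : Matrix (Fin n) (Fin p) ℝ)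
    (hf : ∀ i j, IntervalIntegrable (fun s => f s i j) volume a b) :
    entryIntegral (fun s => f s * B) a b = entryIntegral f a b * B := by
  ext i j
  simp only [entryIntegral, of_apply, mul_apply]
  rw [intervalIntegral.integral_finsetSum fun k _ => (hf i k).mul_const _]
  simp only [intervalIntegral.integral_mul_const]

theorem entryIntegral_comp_add_right (f : ℝ → Matrix (Fin m) (Fin n) ℝ) (d : ℝ) :
    entryIntegral (fun s => f (s + d)) a b = entryIntegral f (a + d) (b + d) := by
  ext i j
  exact intervalIntegral.integral_comp_add_right (fun s => f s i j) d

theorem entryIntegral_add_adjacent_intervals {f : ℝ → Matrix (Fin m) (Fin n) ℝ} {c : ℝ}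
    (hab : ∀ i j, IntervalIntegrable (fun s => f s i j) volume a b)
    (hbc : ∀ i j, IntervalIntegrable (fun s => f s i j) volume b c) :
    entryIntegral f a b + entryIntegral f b c = entryIntegral f a c := by
  ext i j
  exact intervalIntegral.integral_add_adjacent_intervals (hab i j) (hbc i j)

theorem entryIntegral_congr {f g : ℝ → Matrix (Fin m) (Fin n) ℝ} (h : Set.EqOn f g (Set.uIcc a b)) :
    entryIntegral f a b = entryIntegral g a b := by
  ext i j
  exact intervalIntegral.integral_congr fun s hs => congrFun (congrFun (h hs) i) j

theorem entryIntegral_mul_mul (A : Matrix (Fin m) (Fin n) ℝ) {f : ℝ → Matrix (Fin n) (Fin p) ℝ}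
    {q : ℕ} (B : Matrix (Fin p) (Fin q) ℝ)
    (hf : ∀ i j, IntervalIntegrable (fun s => f s i j) volume a b) :
    entryIntegral (fun s => A * f s * B) a b = A * entryIntegral f a b * B := by
  rw [entryIntegral_mul_right B (intervalIntegrable_matrix_mul_apply hf),
    entryIntegral_mul_left A hf]

theorem entryIntegral_zero_add_of_shift {F : ℝ → Matrix (Fin m) (Fin n) ℝ} (hF : Continuous F)
    {θ t : ℝ} (P : Matrix (Fin m) (Fin m) ℝ) (Q : Matrix (Fin n) (Fin n) ℝ)
    (hshift : ∀ s, 0 ≤ s → F (s + θ) = P * F s * Q) (ht : 0 ≤ t) :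
    entryIntegral F 0 (t + θ) = entryIntegral F 0 θ + P * entryIntegral F 0 t * Q := by
  have hint (a b : ℝ) (i j) : IntervalIntegrable (fun s => F s i j) volume a b :=
    (hF.matrix_elem i j).intervalIntegrable a b
  rw [← entryIntegral_add_adjacent_intervals (hint 0 θ) (hint θ (t + θ)),
    ← entryIntegral_mul_mul P Q (hint 0 t)]
  congr 1
  calc entryIntegral F θ (t + θ) = entryIntegral (fun s => F (s + θ)) 0 t := by
        rw [entryIntegral_comp_add_right, zero_add]
    _ = entryIntegral (fun s => P * F s * Q) 0 t := entryIntegral_congr fun s hs =>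
        hshift s (by rw [Set.uIcc_of_le ht] at hs; exact hs.1)

end entryIntegral

theorem periodic_covariance_of_lyapunov_general {n N : ℕ} (θ ε : ℝ)
    (Φ : ℝ → Matrix (Fin n) (Fin n) ℝ) (Γ : ℝ → Matrix (Fin n) (Fin N) ℝ)
    (hΦcont : Continuous Φ) (hΦinv : ∀ t : ℝ, IsUnit (Φ t).det)
    (hΦmul : ∀ t : ℝ, 0 ≤ t → Φ (t + θ) = Φ t * Φ θ)
    (hΓcont : Continuous Γ) (hΓper : ∀ t : ℝ, Γ (t + θ) = Γ t)
    (S0 : Matrix (Fin n) (Fin n) ℝ)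
    (hLyap : Φ θ * S0 * (Φ θ)ᵀ - S0 +
      ε • entryIntegral
        (fun s => (Φ θ * (Φ s)⁻¹ * Γ s) * (Φ θ * (Φ s)⁻¹ * Γ s)ᵀ) 0 θ = 0)
    (S : ℝ → Matrix (Fin n) (Fin n) ℝ)
    (hS : ∀ t : ℝ, S t = Φ t *
      (S0 + ε • entryIntegral (fun s => ((Φ s)⁻¹ * Γ s) * ((Φ s)⁻¹ * Γ s)ᵀ) 0 t) * (Φ t)ᵀ) :
    ∀ t : ℝ, 0 ≤ t → S (t + θ) = S t := by
  intro t ht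
  set F : ℝ → Matrix (Fin n) (Fin n) ℝ := fun s => ((Φ s)⁻¹ * Γ s) * ((Φ s)⁻¹ * Γ s)ᵀ
  have hFcont : Continuous F := by
    have := (hΦcont.matrix_inv_of_isUnit_det hΦinv).matrix_mul hΓcont
    exact this.matrix_mul this.matrix_transpose
  have hsplit := entryIntegral_zero_add_of_shift (θ := θ) hFcont (Φ θ)⁻¹ (Φ θ)⁻¹ᵀ (fun s hs => by
    simp only [F, hΦmul s hs, hΓper s, Matrix.mul_inv_rev, transpose_mul, Matrix.mul_assoc]) ht
  have hconj : entryIntegral (fun s => (Φ θ * (Φ s)⁻¹ * Γ s) * (Φ θ * (Φ s)⁻¹ * Γ s)ᵀ) 0 θ =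
      Φ θ * entryIntegral F 0 θ * (Φ θ)ᵀ := by
    rw [← entryIntegral_mul_mul _ _ fun i j => (hFcont.matrix_elem i j).intervalIntegrable 0 θ]
    simp only [F, transpose_mul, Matrix.mul_assoc]
  have hLyap' : Φ θ * (S0 + ε • entryIntegral F 0 θ) * (Φ θ)ᵀ = S0 := by
    rw [hconj] at hLyap
    rw [← sub_eq_zero, ← hLyap, Matrix.mul_add, Matrix.add_mul, Matrix.mul_smul, Matrix.smul_mul]
    abel
  calc S (t + θ) = Φ t * (Φ θ * (S0 + ε • entryIntegral F 0 θ +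
        (Φ θ)⁻¹ * (ε • entryIntegral F 0 t) * (Φ θ)⁻¹ᵀ) * (Φ θ)ᵀ) * (Φ t)ᵀ := by
        rw [hS, hΦmul t ht, hsplit]
        simp only [transpose_mul, Matrix.mul_assoc, smul_add, Matrix.mul_smul, Matrix.smul_mul,
          add_assoc]
    _ = S t := by rw [mul_add_inv_conj_mul_transpose (hΦinv θ), hLyap', hS]

/-- Let `Φ` be a continuous family of invertible matrices with
`Φ(t+θ) = Φ(t) Φ(θ)` for `t ≥ 0`, `Γ` continuous and `θ`-periodic, and let the symmetric
matrix `Σ₀` solve the discrete-type Lyapunov equation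
`Φ(θ) Σ₀ Φ(θ)ᵀ - Σ₀ + ε ∫₀^θ (Φ(θ)Φ(s)⁻¹Γ(s))(Φ(θ)Φ(s)⁻¹Γ(s))ᵀ ds = 0`. Then
`Σ(t) = Φ(t)[Σ₀ + ε ∫₀^t (Φ(s)⁻¹Γ(s))(Φ(s)⁻¹Γ(s))ᵀ ds]Φ(t)ᵀ` is `θ`-periodic on `t ≥ 0`. -/
theorem periodic_covariance_of_lyapunov {n N : ℕ} (θ ε : ℝ) (hθ : 0 < θ) (hε : 0 < ε)
    (Φ : ℝ → Matrix (Fin n) (Fin n) ℝ) (Γ : ℝ → Matrix (Fin n) (Fin N) ℝ)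
    (hΦcont : Continuous Φ) (hΦinv : ∀ t : ℝ, IsUnit (Φ t).det)
    (hΦmul : ∀ t : ℝ, 0 ≤ t → Φ (t + θ) = Φ t * Φ θ)
    (hΓcont : Continuous Γ) (hΓper : ∀ t : ℝ, Γ (t + θ) = Γ t)
    (S0 : Matrix (Fin n) (Fin n) ℝ) (hS0symm : S0.IsSymm)
    (hLyap : Φ θ * S0 * (Φ θ)ᵀ - S0 +
      ε • entryIntegral
        (fun s => (Φ θ * (Φ s)⁻¹ * Γ s) * (Φ θ * (Φ s)⁻¹ * Γ s)ᵀ) 0 θ = 0)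
    (S : ℝ → Matrix (Fin n) (Fin n) ℝ)
    (hS : ∀ t : ℝ, S t = Φ t *
      (S0 + ε • entryIntegral (fun s => ((Φ s)⁻¹ * Γ s) * ((Φ s)⁻¹ * Γ s)ᵀ) 0 t) * (Φ t)ᵀ) :
    ∀ t : ℝ, 0 ≤ t → S (t + θ) = S t :=
  periodic_covariance_of_lyapunov_general θ ε Φ Γ hΦcont hΦinv hΦmul hΓcont hΓper S0 hLyap S hS
end

section
/- Let θ > 0, n, N ∈ ℕ, ε > 0. Let C be a constant n×n real matrix such that every complex eigenvalue of the matrix exponential exp(θC) has modulus strictly less than 1. Let Γ : ℝ → ℝ^{n×N} be continuously differentiable and θ-periodic. Suppose Σ : ℝ → ℝ^{n×n} is a differentiable family of real symmetric matrices satisfying, for every t ≥ 0, the discrete-type Lyapunov equation exp(θC) Σ(t) exp(θC)ᵀ − Σ(t) + ε ∫₀^θ (exp((θ−s)C) Γ(t+s)) (exp((θ−s)C) Γ(t+s))ᵀ ds = O. Then for every t ≥ 0, C Σ(t) + Σ(t) Cᵀ + ε Γ(t)Γ(t)ᵀ − Σ′(t) = O, i.e., Σ(t) satisfies the continuous-type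 Lyapunov equation Im_c(Σ(t), C, ε Γ(t)Γ(t)ᵀ − dΣ(t)/dt) = O. -/
open Matrix

section LyapHelpers

open NormedSpace Filter Polynomial intervalIntegral

attribute [local instance] Matrix.linftyOpSemiNormedRing Matrix.linftyOpNormedRing
  Matrix.linftyOpNormedAlgebra

-- entry derivative of product
theorem lyap_hasDerivAt_mul {p q r : ℕ} {t : ℝ}
    {f : ℝ → Matrix (Fin p) (Fin q) ℝ} {g : ℝ → Matrix (Fin q) (Fin r) ℝ}
    {f' : Matrix (Fin p) (Fin q) ℝ} {g' : Matrix (Fin q) (Fin r) ℝ}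
    (hf : ∀ i j, HasDerivAt (fun u => f u i j) (f' i j) t)
    (hg : ∀ i j, HasDerivAt (fun u => g u i j) (g' i j) t) :
    ∀ i j, HasDerivAt (fun u => (f u * g u) i j) ((f' * g t + f t * g') i j) t := by
  intro i j
  have h := HasDerivAt.fun_sum (fun k (_ : k ∈ Finset.univ) => ((hf i k).fun_mul (hg k j)))
  simpa [Matrix.mul_apply, Matrix.add_apply, Finset.sum_add_distrib] using h

-- exp entry derivative
theorem lyap_hasDerivAt_exp {p : ℕ} (C : Matrix (Fin p) (Fin p) ℝ) (t : ℝ) (i j : Fin p) :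
    HasDerivAt (fun u : ℝ => exp (u • C) i j) ((C * exp (t • C)) i j) t := by
  have h : HasDerivAt (fun u : ℝ => exp (u • C)) (C * exp (t • C)) t :=
    hasDerivAt_exp_smul_const' C t
  let L : Matrix (Fin p) (Fin p) ℝ →ₗ[ℝ] ℝ :=
    { toFun := fun M => M i j, map_add' := fun _ _ => rfl, map_smul' := fun _ _ => rfl }
  exact (L.toContinuousLinearMap.hasFDerivAt.comp_hasDerivAt t h)

theorem lyap_exp_add {p : ℕ} (C : Matrix (Fin p) (Fin p) ℝ) (a b : ℝ) :
    exp ((a + b) • C) = exp (a • C) * exp (b • C) := by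
  rw [add_smul]
  exact Matrix.exp_add_of_commute _ _ (((Commute.refl C).smul_right b).smul_left a)

theorem lyap_exp_zero {p : ℕ} (C : Matrix (Fin p) (Fin p) ℝ) : exp ((0:ℝ) • C) = 1 := by
  rw [zero_smul, exp_zero]

theorem lyap_exp_mul_exp_neg {p : ℕ} (C : Matrix (Fin p) (Fin p) ℝ) (a : ℝ) :
    exp (a • C) * exp ((-a) • C) = 1 := by
  rw [← lyap_exp_add, add_neg_cancel, lyap_exp_zero]

theorem lyap_commute_exp {p : ℕ} (C : Matrix (Fin p) (Fin p) ℝ) (a : ℝ) :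
    C * exp (a • C) = exp (a • C) * C := by
  have : Commute (exp (a • C)) C := by
    letI := Matrix.linftyOpSemiNormedRing (α := ℝ) (n := Fin p)
    letI := Matrix.linftyOpNormedRing (α := ℝ) (n := Fin p)
    letI : NormedAlgebra ℝ (Matrix (Fin p) (Fin p) ℝ) := Matrix.linftyOpNormedAlgebra
    exact Commute.exp_left ((Commute.refl C).smul_left a)
  exact this.symm.eq

theorem lyap_ftc {g : ℝ → ℝ} (hg : Continuous g) (a t : ℝ) :
    HasDerivAt (fun u => ∫ s in a..u, g s) (g t) t :=
  integral_hasDerivAt_right (hg.intervalIntegrable a t)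
    (hg.stronglyMeasurableAtFilter _ _) hg.continuousAt

theorem lyap_window_deriv {g : ℝ → ℝ} (hg : Continuous g) (θ t : ℝ) :
    HasDerivAt (fun u => ∫ s in u..(u + θ), g s) (g (t + θ) - g t) t := by
  have h1 : ∀ u : ℝ, (∫ s in u..(u + θ), g s)
      = (∫ s in (0:ℝ)..(u + θ), g s) - ∫ s in (0:ℝ)..u, g s := fun u =>
    (integral_interval_sub_left (hg.intervalIntegrable _ _) (hg.intervalIntegrable _ _)).symm
  have h2 : HasDerivAt (fun u : ℝ => ∫ s in (0:ℝ)..(u + θ), g s) (g (t + θ)) t := by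
    have := (lyap_ftc hg 0 (t + θ)).comp t ((hasDerivAt_id t).add_const θ)
    simpa [Function.comp_def] using this
  have h3 := h2.sub (lyap_ftc hg 0 t)
  exact h3.congr_of_eventuallyEq (Filter.Eventually.of_forall fun u => h1 u)

theorem lyap_entryIntegral_comp_add {p r : ℕ} (f : ℝ → Matrix (Fin p) (Fin r) ℝ) (t a b : ℝ) :
    entryIntegral (fun s => f (t + s)) a b = entryIntegral f (t + a) (t + b) := by
  ext i j
  exact integral_comp_add_left (fun s => f s i j) t

theorem lyap_cont_mul_entry {p q r : ℕ} {f : ℝ → Matrix (Fin p) (Fin q) ℝ}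
    {g : ℝ → Matrix (Fin q) (Fin r) ℝ}
    (hf : ∀ i j, Continuous fun s => f s i j) (hg : ∀ i j, Continuous fun s => g s i j) :
    ∀ i j, Continuous fun s => (f s * g s) i j := by
  intro i j
  simp only [Matrix.mul_apply]
  exact continuous_finset_sum _ fun k _ => (hf i k).mul (hg k j)

theorem lyap_entryIntegral_conj {q : ℕ} {f : ℝ → Matrix (Fin q) (Fin q) ℝ}
    (hf : ∀ i j, Continuous fun s => f s i j) (P Q : Matrix (Fin q) (Fin q) ℝ) (a b : ℝ) :
    entryIntegral (fun s => P * f s * Q) a b = P * entryIntegral f a b * Q := by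
  have hPf : ∀ i l, Continuous fun s => (P * f s) i l :=
    lyap_cont_mul_entry (fun i j => continuous_const) hf
  have hmain : ∀ i l, (∫ s in a..b, (P * f s) i l) = (P * entryIntegral f a b) i l := by
    intro i l
    simp only [Matrix.mul_apply, entryIntegral, Matrix.of_apply]
    rw [integral_finset_sum (fun k _ => ((continuous_const.fun_mul (hf k l)).intervalIntegrable a b))]
    exact Finset.sum_congr rfl fun k _ => intervalIntegral.integral_const_mul _ _
  ext i j
  show (∫ s in a..b, (P * f s * Q) i j) = _
  calc (∫ s in a..b, (P * f s * Q) i j)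
      = ∫ s in a..b, ∑ l, (P * f s) i l * Q l j := by
        simp only [Matrix.mul_apply]
    _ = ∑ l, ∫ s in a..b, (P * f s) i l * Q l j := by
        exact integral_finset_sum (fun l _ => (((hPf i l).mul continuous_const).intervalIntegrable a b))
    _ = ∑ l, (∫ s in a..b, (P * f s) i l) * Q l j := by
        exact Finset.sum_congr rfl fun l _ => integral_mul_const _ _
    _ = ∑ l, (P * entryIntegral f a b) i l * Q l j := by
        exact Finset.sum_congr rfl fun l _ => by rw [hmain]
    _ = (P * entryIntegral f a b * Q) i j := by
        simp only [Matrix.mul_apply]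

theorem lyap_entry_le_norm {p : ℕ} (M : Matrix (Fin p) (Fin p) ℂ) (i j : Fin p) :
    ‖M i j‖ ≤ ‖M‖ := by
  have h : ‖M i j‖₊ ≤ ‖M‖₊ := by
    rw [Matrix.linfty_opNNNorm_def]
    exact le_trans (Finset.single_le_sum (f := fun j' => ‖M i j'‖₊) (fun _ _ => zero_le)
      (Finset.mem_univ j)) (Finset.le_sup (f := fun i => ∑ j', ‖M i j'‖₊) (Finset.mem_univ i))
  exact h

theorem lyap_charpoly_eval {p : ℕ} (B : Matrix (Fin p) (Fin p) ℂ) (z : ℂ) :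
    B.charpoly.eval z = (algebraMap ℂ (Matrix (Fin p) (Fin p) ℂ) z - B).det := by
  rw [Matrix.charpoly, ← coe_evalRingHom, RingHom.map_det]
  congr 1
  ext i j
  by_cases h : i = j <;>
    simp [h, charmatrix_apply, Matrix.algebraMap_matrix_apply, Matrix.diagonal_apply,
      Matrix.map_apply]

theorem lyap_pow_entry_tendsto {p : ℕ} (A : Matrix (Fin p) (Fin p) ℝ)
    (hspec : ∀ s : ℂ, ((A.map (fun x => (x : ℂ))).charpoly.IsRoot s → ‖s‖ < 1))
    (i j : Fin p) :
    Tendsto (fun k : ℕ => (A ^ k) i j) atTop (nhds 0) := by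
  haveI : Nonempty (Fin p) := ⟨i⟩
  set B : Matrix (Fin p) (Fin p) ℂ := A.map (fun x => (x : ℂ)) with hB
  haveI : Nontrivial (Matrix (Fin p) (Fin p) ℂ) := by
    refine ⟨0, 1, fun h => ?_⟩
    have := congrFun (congrFun h i) i
    simp [Matrix.one_apply] at this
  -- all spectrum elements have nnnorm < 1
  have hsp : ∀ z ∈ spectrum ℂ B, ‖z‖₊ < 1 := by
    intro z hz
    have hroot : B.charpoly.IsRoot z := by
      rw [spectrum.mem_iff] at hz
      have hdet : (algebraMap ℂ (Matrix (Fin p) (Fin p) ℂ) z - B).det = 0 := by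
        by_contra h
        exact hz ((Matrix.isUnit_iff_isUnit_det _).mpr (isUnit_iff_ne_zero.mpr h))
      simpa [Polynomial.IsRoot, lyap_charpoly_eval] using hdet
    have habs := hspec z hroot
    rw [← NNReal.coe_lt_one, coe_nnnorm]
    exact habs
  have hrad : spectralRadius ℂ B < 1 := by
    have h := spectrum.spectralRadius_lt_of_forall_lt_of_nonempty (spectrum.nonempty B)
      (r := 1) hsp
    simpa using h
  -- Gelfand's formula gives the norm of powers tending to zero
  obtain ⟨r, hρr, hr1⟩ := exists_between hrad
  have hgel := spectrum.pow_nnnorm_pow_one_div_tendsto_nhds_spectralRadius B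
  have hev : ∀ᶠ k : ℕ in atTop, (‖B ^ k‖₊ : ENNReal) ^ (1 / (k:ℝ)) < r :=
    hgel.eventually_lt_const hρr
  have hrne : r ≠ ⊤ := (hr1.trans_le le_top).ne
  have hr1' : r.toReal < 1 := by
    have := ENNReal.toReal_lt_toReal hrne (by norm_num : (1:ENNReal) ≠ ⊤) |>.mpr hr1
    simpa using this
  have hbound : ∀ᶠ k : ℕ in atTop, ‖B ^ k‖ ≤ r.toReal ^ k := by
    filter_upwards [hev, eventually_ge_atTop 1] with k hk hk1
    have hkne : (k:ℝ) ≠ 0 := by positivity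
    have h2 : ((‖B ^ k‖₊ : ENNReal) ^ (1 / (k:ℝ))) ^ (k:ℝ) ≤ r ^ (k:ℝ) :=
      ENNReal.rpow_le_rpow hk.le (by positivity)
    rw [← ENNReal.rpow_mul, one_div, inv_mul_cancel₀ hkne, ENNReal.rpow_one] at h2
    have h3 : (‖B ^ k‖₊ : ENNReal).toReal ≤ (r ^ (k:ℝ)).toReal :=
      ENNReal.toReal_mono (by rw [ENNReal.rpow_natCast]; exact ENNReal.pow_ne_top hrne) h2
    rw [← ENNReal.toReal_rpow] at h3
    simpa [ENNReal.coe_toReal, Real.rpow_natCast] using h3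
  have hnorm0 : Tendsto (fun k : ℕ => ‖B ^ k‖) atTop (nhds 0) := by
    refine squeeze_zero' (Eventually.of_forall fun k => norm_nonneg _) hbound ?_
    exact tendsto_pow_atTop_nhds_zero_of_lt_one ENNReal.toReal_nonneg hr1'
  -- entrywise
  have hmap : ∀ k : ℕ, B ^ k = (A ^ k).map (fun x => (x : ℂ)) := by
    intro k
    have h1 : B = (Complex.ofRealHom.mapMatrix : Matrix (Fin p) (Fin p) ℝ →+* _) A := by
      rw [RingHom.mapMatrix_apply]; rfl
    have h2 := map_pow (Complex.ofRealHom.mapMatrix : Matrix (Fin p) (Fin p) ℝ →+* _) A k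
    rw [h1, ← h2, RingHom.mapMatrix_apply]; rfl
  refine squeeze_zero_norm' ?_ hnorm0
  filter_upwards with k
  have h1 : ‖(A ^ k) i j‖ = ‖(B ^ k) i j‖ := by
    rw [hmap k]; simp [Matrix.map_apply]
  rw [h1]
  exact lyap_entry_le_norm _ i j

theorem lyap_stein_zero {p : ℕ} (A : Matrix (Fin p) (Fin p) ℝ)
    (hspec : ∀ s : ℂ, ((A.map (fun x => (x : ℂ))).charpoly.IsRoot s → ‖s‖ < 1))
    (G : Matrix (Fin p) (Fin p) ℝ) (hG : A * G * Aᵀ = G) : G = 0 := by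
  have hpow : ∀ k : ℕ, A ^ k * G * (A ^ k)ᵀ = G := by
    intro k
    induction k with
    | zero => simp
    | succ k ih =>
      calc A ^ (k+1) * G * (A ^ (k+1))ᵀ
          = A * (A ^ k * G * (A ^ k)ᵀ) * Aᵀ := by
            rw [pow_succ', Matrix.transpose_mul]
            noncomm_ring
        _ = G := by rw [ih, hG]
  ext i j
  have htend : Tendsto (fun k : ℕ => (A ^ k * G * (A ^ k)ᵀ) i j) atTop (nhds 0) := by
    have hentry : ∀ k : ℕ, (A ^ k * G * (A ^ k)ᵀ) i j
        = ∑ b, ∑ a, (A ^ k) i a * G a b * (A ^ k) j b := by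
      intro k
      simp only [Matrix.mul_apply, Matrix.transpose_apply, Finset.sum_mul]
    simp only [hentry]
    have : Tendsto (fun k : ℕ => ∑ b : Fin p, ∑ a : Fin p, (A ^ k) i a * G a b * (A ^ k) j b)
        atTop (nhds (∑ b : Fin p, ∑ a : Fin p, (0:ℝ))) := by
      refine tendsto_finset_sum _ fun b _ => tendsto_finset_sum _ fun a _ => ?_
      have h0 : (0:ℝ) = 0 * G a b * 0 := by ring
      rw [h0]
      exact ((lyap_pow_entry_tendsto A hspec i a).mul tendsto_const_nhds).mul
        (lyap_pow_entry_tendsto A hspec j b)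
    simpa using this
  have hconst : Tendsto (fun k : ℕ => (A ^ k * G * (A ^ k)ᵀ) i j) atTop (nhds (G i j)) := by
    simp only [fun k => congrFun (congrFun (hpow k) i) j]
    exact tendsto_const_nhds
  have := tendsto_nhds_unique hconst htend
  simpa using this


theorem lyap_J_hasDerivAt {n N : ℕ} (θ : ℝ) (C : Matrix (Fin n) (Fin n) ℝ)
    (Γ Γ' : ℝ → Matrix (Fin n) (Fin N) ℝ)
    (hΓderiv : ∀ (i : Fin n) (j : Fin N) (t : ℝ), HasDerivAt (fun u => Γ u i j) (Γ' t i j) t)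
    (hΓper : ∀ u : ℝ, Γ (u + θ) = Γ u) (t : ℝ) (i j : Fin n) :
    HasDerivAt
      (fun u => entryIntegral (fun s =>
          (exp ((θ - s) • C) * Γ (u + s)) *
          (exp ((θ - s) • C) * Γ (u + s))ᵀ) 0 θ i j)
      ((C * entryIntegral (fun s =>
          (exp ((θ - s) • C) * Γ (t + s)) *
          (exp ((θ - s) • C) * Γ (t + s))ᵀ) 0 θ
        + entryIntegral (fun s =>
          (exp ((θ - s) • C) * Γ (t + s)) *
          (exp ((θ - s) • C) * Γ (t + s))ᵀ) 0 θ * Cᵀ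
        + Γ t * (Γ t)ᵀ
        - exp (θ • C) * (Γ t * (Γ t)ᵀ) * (exp (θ • C))ᵀ) i j) t := by
  -- continuity facts
  have hEc : ∀ (i' j' : Fin n), Continuous fun u : ℝ => exp (u • C) i' j' := fun i' j' =>
    continuous_iff_continuousAt.mpr fun u => (lyap_hasDerivAt_exp C u i' j').continuousAt
  have hEnegc : ∀ (i' j' : Fin n), Continuous fun u : ℝ => exp ((-u) • C) i' j' :=
    fun i' j' => (hEc i' j').comp continuous_neg
  have hΓc : ∀ (i' : Fin n) (j' : Fin N), Continuous fun u => Γ u i' j' := fun i' j' =>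
    continuous_iff_continuousAt.mpr fun u => (hΓderiv i' j' u).continuousAt
  have hHc : ∀ (i' j' : Fin n), Continuous fun u => (Γ u * (Γ u)ᵀ) i' j' :=
    lyap_cont_mul_entry hΓc (fun i' j' => hΓc j' i')
  have hLc : ∀ (i' j' : Fin n), Continuous fun u : ℝ =>
      (exp ((-u) • C) * (Γ u * (Γ u)ᵀ) * (exp ((-u) • C))ᵀ) i' j' :=
    lyap_cont_mul_entry (lyap_cont_mul_entry hEnegc hHc) (fun i' j' => hEnegc j' i')
  -- Step A : J τ = P τ * W τ * (P τ)ᵀ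
  have hJPW : ∀ τ : ℝ,
      entryIntegral (fun s =>
          (exp ((θ - s) • C) * Γ (τ + s)) *
          (exp ((θ - s) • C) * Γ (τ + s))ᵀ) 0 θ
      = exp ((θ + τ) • C)
        * entryIntegral (fun u => exp ((-u) • C) * (Γ u * (Γ u)ᵀ) * (exp ((-u) • C))ᵀ)
            τ (τ + θ)
        * (exp ((θ + τ) • C))ᵀ := by
    intro τ
    have hint : ∀ s : ℝ,
        (exp ((θ - s) • C) * Γ (τ + s)) * (exp ((θ - s) • C) * Γ (τ + s))ᵀ
        = exp ((θ + τ) • C)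
          * (exp ((-(τ + s)) • C) * (Γ (τ + s) * (Γ (τ + s))ᵀ) * (exp ((-(τ + s)) • C))ᵀ)
          * (exp ((θ + τ) • C))ᵀ := by
      intro s
      have e1 : exp ((θ - s) • C)
          = exp ((θ + τ) • C) * exp ((-(τ + s)) • C) := by
        rw [← lyap_exp_add C (θ + τ) (-(τ + s))]
        congr 2
        ring
      rw [e1]
      simp only [Matrix.transpose_mul, Matrix.mul_assoc]
    calc entryIntegral (fun s =>
          (exp ((θ - s) • C) * Γ (τ + s)) *
          (exp ((θ - s) • C) * Γ (τ + s))ᵀ) 0 θ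
        = entryIntegral (fun s => exp ((θ + τ) • C)
            * (exp ((-(τ + s)) • C) * (Γ (τ + s) * (Γ (τ + s))ᵀ)
                * (exp ((-(τ + s)) • C))ᵀ)
            * (exp ((θ + τ) • C))ᵀ) 0 θ := by
          exact congrArg (entryIntegral · 0 θ) (funext hint)
      _ = exp ((θ + τ) • C)
            * entryIntegral (fun s => exp ((-(τ + s)) • C) * (Γ (τ + s) * (Γ (τ + s))ᵀ)
                * (exp ((-(τ + s)) • C))ᵀ) 0 θ
            * (exp ((θ + τ) • C))ᵀ := by
          exact lyap_entryIntegral_conj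
            (fun i' j' => (hLc i' j').comp (continuous_const.add continuous_id)) _ _ 0 θ
      _ = exp ((θ + τ) • C)
            * entryIntegral (fun u => exp ((-u) • C) * (Γ u * (Γ u)ᵀ) * (exp ((-u) • C))ᵀ)
                τ (τ + θ)
            * (exp ((θ + τ) • C))ᵀ := by
          rw [lyap_entryIntegral_comp_add
            (fun u => exp ((-u) • C) * (Γ u * (Γ u)ᵀ) * (exp ((-u) • C))ᵀ) τ 0 θ, add_zero]
  -- derivatives of the three factors
  have hPd : ∀ (i' j' : Fin n), HasDerivAt (fun u : ℝ => exp ((θ + u) • C) i' j')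
      ((C * exp ((θ + t) • C)) i' j') t := by
    intro i' j'
    have h := (lyap_hasDerivAt_exp C (θ + t) i' j').comp t ((hasDerivAt_id t).const_add θ)
    simpa [Function.comp_def] using h
  have hPTd : ∀ (i' j' : Fin n), HasDerivAt (fun u : ℝ => (exp ((θ + u) • C))ᵀ i' j')
      (((exp ((θ + t) • C))ᵀ * Cᵀ) i' j') t := by
    intro i' j'
    have h := hPd j' i'
    have e : ((exp ((θ + t) • C))ᵀ * Cᵀ) i' j' = (C * exp ((θ + t) • C)) j' i' := by
      rw [← Matrix.transpose_mul, Matrix.transpose_apply]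
    rw [e]
    exact h
  have hWd : ∀ (i' j' : Fin n), HasDerivAt (fun u : ℝ =>
      entryIntegral (fun v => exp ((-v) • C) * (Γ v * (Γ v)ᵀ) * (exp ((-v) • C))ᵀ)
        u (u + θ) i' j')
      (((exp ((-(t + θ)) • C) * (Γ (t + θ) * (Γ (t + θ))ᵀ) * (exp ((-(t + θ)) • C))ᵀ)
        - (exp ((-t) • C) * (Γ t * (Γ t)ᵀ) * (exp ((-t) • C))ᵀ)) i' j') t := by
    intro i' j'
    have h := lyap_window_deriv (hLc i' j') θ t
    simpa [entryIntegral, Matrix.sub_apply] using h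
  -- product rule
  have hPW := lyap_hasDerivAt_mul hPd hWd
  have hprod := lyap_hasDerivAt_mul hPW hPTd
  -- conjugation identities
  have hconj : ∀ a : ℝ,
      exp ((θ + t) • C) * (exp ((-a) • C) * (Γ a * (Γ a)ᵀ) * (exp ((-a) • C))ᵀ)
        * (exp ((θ + t) • C))ᵀ
      = exp ((θ + t - a) • C) * (Γ a * (Γ a)ᵀ) * (exp ((θ + t - a) • C))ᵀ := by
    intro a
    have e1 : exp ((θ + t) • C) * exp ((-a) • C) = exp ((θ + t - a) • C) := by
      rw [← lyap_exp_add C (θ + t) (-a)]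
      congr 2
      try ring
    calc exp ((θ + t) • C) * (exp ((-a) • C) * (Γ a * (Γ a)ᵀ) * (exp ((-a) • C))ᵀ)
          * (exp ((θ + t) • C))ᵀ
        = (exp ((θ + t) • C) * exp ((-a) • C)) * (Γ a * (Γ a)ᵀ)
            * (exp ((θ + t) • C) * exp ((-a) • C))ᵀ := by
          simp only [Matrix.transpose_mul, Matrix.mul_assoc]
      _ = exp ((θ + t - a) • C) * (Γ a * (Γ a)ᵀ) * (exp ((θ + t - a) • C))ᵀ := by
          rw [e1]
  have hPLθ : exp ((θ + t) • C)
      * (exp ((-(t + θ)) • C) * (Γ (t + θ) * (Γ (t + θ))ᵀ) * (exp ((-(t + θ)) • C))ᵀ)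
      * (exp ((θ + t) • C))ᵀ = Γ t * (Γ t)ᵀ := by
    rw [hconj (t + θ), hΓper t]
    have e0 : θ + t - (t + θ) = (0:ℝ) := by ring
    rw [e0, lyap_exp_zero]
    simp
  have hPLt : exp ((θ + t) • C)
      * (exp ((-t) • C) * (Γ t * (Γ t)ᵀ) * (exp ((-t) • C))ᵀ)
      * (exp ((θ + t) • C))ᵀ
      = exp (θ • C) * (Γ t * (Γ t)ᵀ) * (exp (θ • C))ᵀ := by
    rw [hconj t]
    have e0 : θ + t - t = θ := by ring
    rw [e0]
  -- identify the derivative matrix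
  have hD2 :
      ((C * exp ((θ + t) • C)
          * entryIntegral (fun v => exp ((-v) • C) * (Γ v * (Γ v)ᵀ) * (exp ((-v) • C))ᵀ)
              t (t + θ)
        + exp ((θ + t) • C)
          * (((exp ((-(t + θ)) • C) * (Γ (t + θ) * (Γ (t + θ))ᵀ) * (exp ((-(t + θ)) • C))ᵀ)
            - (exp ((-t) • C) * (Γ t * (Γ t)ᵀ) * (exp ((-t) • C))ᵀ))))
        * (exp ((θ + t) • C))ᵀ
      + (exp ((θ + t) • C)
          * entryIntegral (fun v => exp ((-v) • C) * (Γ v * (Γ v)ᵀ) * (exp ((-v) • C))ᵀ)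
              t (t + θ))
        * ((exp ((θ + t) • C))ᵀ * Cᵀ))
      = (C * entryIntegral (fun s =>
          (exp ((θ - s) • C) * Γ (t + s)) *
          (exp ((θ - s) • C) * Γ (t + s))ᵀ) 0 θ
        + entryIntegral (fun s =>
          (exp ((θ - s) • C) * Γ (t + s)) *
          (exp ((θ - s) • C) * Γ (t + s))ᵀ) 0 θ * Cᵀ
        + Γ t * (Γ t)ᵀ
        - exp (θ • C) * (Γ t * (Γ t)ᵀ) * (exp (θ • C))ᵀ) := by
    rw [Matrix.add_mul, Matrix.mul_sub, Matrix.sub_mul, hPLθ, hPLt]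
    rw [hJPW t]
    rw [Matrix.mul_assoc C (exp ((θ + t) • C))
      (entryIntegral (fun v => exp ((-v) • C) * (Γ v * (Γ v)ᵀ) * (exp ((-v) • C))ᵀ)
        t (t + θ))]
    rw [Matrix.mul_assoc C
      (exp ((θ + t) • C)
       * entryIntegral (fun v => exp ((-v) • C) * (Γ v * (Γ v)ᵀ) * (exp ((-v) • C))ᵀ)
           t (t + θ))
      (exp ((θ + t) • C))ᵀ]
    rw [← Matrix.mul_assoc
      (exp ((θ + t) • C)
       * entryIntegral (fun v => exp ((-v) • C) * (Γ v * (Γ v)ᵀ) * (exp ((-v) • C))ᵀ)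
           t (t + θ))
      (exp ((θ + t) • C))ᵀ Cᵀ]
    abel
  -- conclude
  have hfinal := hprod i j
  rw [hD2] at hfinal
  refine hfinal.congr_of_eventuallyEq (Filter.Eventually.of_forall fun u => ?_)
  exact congrFun (congrFun (hJPW u) i) j

end LyapHelpers

/-- Let `C` be a constant real `n × n` matrix such that all complex eigenvalues
of `exp(θ C)` have modulus strictly less than 1, let `Γ` be continuously differentiable and
`θ`-periodic, and let `Σ(t)` be a differentiable family of symmetric matrices satisfying, for
every `t ≥ 0`, the discrete-type Lyapunov equation
`exp(θC) Σ(t) exp(θC)ᵀ - Σ(t) + ε ∫₀^θ (exp((θ-s)C)Γ(t+s))(exp((θ-s)C)Γ(t+s))ᵀ ds = 0`.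
Then for every `t ≥ 0`, `C Σ(t) + Σ(t) Cᵀ + ε Γ(t)Γ(t)ᵀ - Σ'(t) = 0`. -/
theorem discrete_to_continuous_lyapunov {n N : ℕ} (θ ε : ℝ) (hθ : 0 < θ) (hε : 0 < ε)
    (C : Matrix (Fin n) (Fin n) ℝ)
    (hspec : ∀ s : ℂ,
      ((NormedSpace.exp (θ • C)).map (fun x => (x : ℂ))).charpoly.IsRoot s →
      ‖s‖ < 1)
    (Γ Γ' : ℝ → Matrix (Fin n) (Fin N) ℝ)
    (hΓderiv : ∀ (i : Fin n) (j : Fin N) (t : ℝ),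
      HasDerivAt (fun u => Γ u i j) (Γ' t i j) t)
    (hΓ'cont : Continuous Γ')
    (hΓper : ∀ t : ℝ, Γ (t + θ) = Γ t)
    (S S' : ℝ → Matrix (Fin n) (Fin n) ℝ)
    (hSsymm : ∀ t : ℝ, (S t).IsSymm)
    (hSderiv : ∀ (i j : Fin n) (t : ℝ), HasDerivAt (fun u => S u i j) (S' t i j) t)
    (hLyap : ∀ t : ℝ, 0 ≤ t →
      NormedSpace.exp (θ • C) * S t * (NormedSpace.exp (θ • C))ᵀ - S t +
        ε • entryIntegral
          (fun s => (NormedSpace.exp ((θ - s) • C) * Γ (t + s)) *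
            (NormedSpace.exp ((θ - s) • C) * Γ (t + s))ᵀ) 0 θ = 0) :
    ∀ t : ℝ, 0 ≤ t →
      C * S t + S t * Cᵀ + ε • (Γ t * (Γ t)ᵀ) - S' t = 0 := by
  intro t ht
  set A : Matrix (Fin n) (Fin n) ℝ := NormedSpace.exp (θ • C) with hAdef
  set J : ℝ → Matrix (Fin n) (Fin n) ℝ := fun u => entryIntegral
      (fun s => (NormedSpace.exp ((θ - s) • C) * Γ (u + s)) *
        (NormedSpace.exp ((θ - s) • C) * Γ (u + s))ᵀ) 0 θ with hJdef
  have hLy : ∀ x : ℝ, 0 ≤ x → A * S x * Aᵀ - S x + ε • J x = 0 := fun x hx => hLyap x hx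
  -- derivative of J at t
  have hJd : ∀ (i j : Fin n), HasDerivAt (fun u => J u i j)
      ((C * J t + J t * Cᵀ + Γ t * (Γ t)ᵀ - A * (Γ t * (Γ t)ᵀ) * Aᵀ) i j) t := by
    intro i j
    exact lyap_J_hasDerivAt θ C Γ Γ' hΓderiv hΓper t i j
  -- derivative of the Lyapunov expression at t
  have hFd : ∀ (i j : Fin n), HasDerivAt (fun u => (A * S u * Aᵀ - S u + ε • J u) i j)
      ((A * S' t * Aᵀ - S' t
        + ε • (C * J t + J t * Cᵀ + Γ t * (Γ t)ᵀ - A * (Γ t * (Γ t)ᵀ) * Aᵀ)) i j) t := by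
    intro i j
    have hconst : ∀ (M : Matrix (Fin n) (Fin n) ℝ) (i j : Fin n),
        HasDerivAt (fun _ : ℝ => M i j) ((0 : Matrix (Fin n) (Fin n) ℝ) i j) t := by
      intro M i j
      simpa using hasDerivAt_const t (M i j)
    have h1 := lyap_hasDerivAt_mul (f := fun _ : ℝ => A) (g := fun u => S u)
      (hconst A) (fun i j => hSderiv i j t)
    have h2 := lyap_hasDerivAt_mul (g := fun _ : ℝ => Aᵀ) h1 (hconst Aᵀ)
    have h3 : HasDerivAt (fun u => (A * S u * Aᵀ) i j) ((A * S' t * Aᵀ) i j) t := by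
      have e : ((0 : Matrix (Fin n) (Fin n) ℝ) * S t + A * S' t) * Aᵀ
          + (A * S t) * (0 : Matrix (Fin n) (Fin n) ℝ) = A * S' t * Aᵀ := by
        simp
      have h := h2 i j
      rw [show ((((0 : Matrix (Fin n) (Fin n) ℝ) * S t + A * S' t) * Aᵀ
          + (A * S t) * (0 : Matrix (Fin n) (Fin n) ℝ)) i j) = (A * S' t * Aᵀ) i j from by
        rw [e]] at h
      exact h
    have h5 : HasDerivAt (fun u => (ε • J u) i j)
        ((ε • (C * J t + J t * Cᵀ + Γ t * (Γ t)ᵀ - A * (Γ t * (Γ t)ᵀ) * Aᵀ)) i j) t := by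
      have h := (hJd i j).const_mul ε
      simpa [Matrix.smul_apply, smul_eq_mul] using h
    have h := (h3.fun_sub (hSderiv i j t)).fun_add h5
    simpa [Matrix.sub_apply, Matrix.add_apply] using h
  -- the derivative vanishes on [0, ∞)
  have hDF0 : A * S' t * Aᵀ - S' t
      + ε • (C * J t + J t * Cᵀ + Γ t * (Γ t)ᵀ - A * (Γ t * (Γ t)ᵀ) * Aᵀ) = 0 := by
    ext i j
    have hu : UniqueDiffWithinAt ℝ (Set.Ici (0:ℝ)) t := (uniqueDiffOn_Ici 0) t (Set.mem_Ici.mpr ht)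
    have h1 := ((hFd i j).hasDerivWithinAt (s := Set.Ici (0:ℝ))).derivWithin hu
    have hz : ∀ x ∈ Set.Ici (0:ℝ), (A * S x * Aᵀ - S x + ε • J x) i j = 0 := fun x hx => by
      rw [hLy x hx]; simp
    have h2 := ((hasDerivWithinAt_const t (Set.Ici (0:ℝ)) (0:ℝ)).congr hz (hz t ht)).derivWithin hu
    rw [Matrix.zero_apply, ← h1, h2]
  -- rearrange the Lyapunov equation
  have hL := hLy t ht
  rw [add_comm, add_eq_zero_iff_eq_neg, neg_sub] at hL
  have hCA : C * A = A * C := lyap_commute_exp C θ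
  have hCAT : Aᵀ * Cᵀ = Cᵀ * Aᵀ := by
    rw [← Matrix.transpose_mul, ← Matrix.transpose_mul, hCA]
  have hmove : ∀ X : Matrix (Fin n) (Fin n) ℝ, C * (A * X) = A * (C * X) := fun X => by
    rw [← Matrix.mul_assoc, hCA, Matrix.mul_assoc]
  -- substitute
  have hkey : A * S' t * Aᵀ - S' t
      + (C * (S t - A * S t * Aᵀ) + (S t - A * S t * Aᵀ) * Cᵀ
        + ε • (Γ t * (Γ t)ᵀ) - ε • (A * (Γ t * (Γ t)ᵀ) * Aᵀ)) = 0 := by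
    have h := hDF0
    rw [smul_sub, smul_add, smul_add, ← mul_smul_comm, ← smul_mul_assoc, hL] at h
    exact h
  -- conclude via the Stein equation uniqueness
  refine lyap_stein_zero A hspec _ ?_
  have expand : (C * S t + S t * Cᵀ + ε • (Γ t * (Γ t)ᵀ) - S' t)
      - A * (C * S t + S t * Cᵀ + ε • (Γ t * (Γ t)ᵀ) - S' t) * Aᵀ
      = A * S' t * Aᵀ - S' t
      + (C * (S t - A * S t * Aᵀ) + (S t - A * S t * Aᵀ) * Cᵀ
        + ε • (Γ t * (Γ t)ᵀ) - ε • (A * (Γ t * (Γ t)ᵀ) * Aᵀ)) := by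
    simp only [Matrix.mul_add, Matrix.add_mul, Matrix.mul_sub, Matrix.sub_mul,
      mul_smul_comm, smul_mul_assoc, Matrix.mul_assoc, hmove, hCAT]
    abel
  have h0 : (C * S t + S t * Cᵀ + ε • (Γ t * (Γ t)ᵀ) - S' t)
      - A * (C * S t + S t * Cᵀ + ε • (Γ t * (Γ t)ᵀ) - S' t) * Aᵀ = 0 := expand.trans hkey
  exact (sub_eq_zero.mp h0).symm
end
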